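/- arXiv:1509.04682 — 7 statements merged into one kernel-verified Lean document; each statement's English description precedes it below -/
import Mathlib

section
/- Suppose that for every (b,c) ∈ U at least one of P(b) and D(c) is nonempty. Then, as extended real numbers, the worst-case value p^+ equals the optimal value of the dual bilinear program: p^+ = sup{(b̂ + b)^T y : Â^T y + s = ĉ + c, s ≥ 0, (b,c) ∈ U}, where the supremum over an empty feasible set is −∞. -/
open Matrix

/-- The perturbed primal feasible set `P(b) = {x : Âx = b̂ + b, x ≥ 0}`. -/
def Pfeas (m n : ℕ) (Ahat : Matrix (Fin m) (Fin n) ℝ) (bhat b : Fin m → ℝ) :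
    Set (Fin n → ℝ) :=
  {x | Ahat.mulVec x = bhat + b ∧ 0 ≤ x}

/-- The perturbed dual feasible set `D(c) = {(y,s) : Âᵀy + s = ĉ + c, s ≥ 0}`. -/
def Dfeas (m n : ℕ) (Ahat : Matrix (Fin m) (Fin n) ℝ) (chat c : Fin n → ℝ) :
    Set ((Fin m → ℝ) × (Fin n → ℝ)) :=
  {ys | Ahat.transpose.mulVec ys.1 + ys.2 = chat + c ∧ 0 ≤ ys.2}

/-- The perturbed optimal value `p(b,c)` as an extended real number
(`sInf ∅ = +∞` in `EReal`). -/
noncomputable def pval (m n : ℕ) (Ahat : Matrix (Fin m) (Fin n) ℝ)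
    (bhat b : Fin m → ℝ) (chat c : Fin n → ℝ) : EReal :=
  sInf ((fun x => (((chat + c) ⬝ᵥ x : ℝ) : EReal)) '' Pfeas m n Ahat bhat b)

/-!
For a fixed perturbation `(b, c)` the inner problem is a standard-form linear program whose
primal or dual is feasible, so LP strong duality holds in `EReal`: `p(b,c)` equals the dual value,
also when it is `-∞` (dual infeasible) or `+∞` (primal infeasible). The worst case `p⁺` is then a
supremum over `U` of dual suprema, which is the supremum of the dual objective over all
`(b, c, y, s)` at once.

Strong duality follows from Farkas' lemma for the primal system bordered by the objective row
`cᵀx + σ = γ`: a certificate with `τ < 0` rescales to a dual point of value `≥ γ`, and one with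
`τ = 0` is a dual ray, impossible if the primal is feasible and unbounding if the dual is.
Farkas' lemma itself separates a point from a finitely generated cone, which is closed because,
by the conic Carathéodory theorem, it is a finite union of images of orthants under injective
linear maps.
-/

section ConicCaratheodory

variable {ι 𝕜 E : Type*} [Field 𝕜] [LinearOrder 𝕜] [IsStrictOrderedRing 𝕜]
  [AddCommGroup E] [Module 𝕜 E]

theorem exists_linearIndepOn_nonneg_sum_eq (v : ι → E) (s : Finset ι) (c : ι → 𝕜)
    (hc : ∀ i ∈ s, 0 ≤ c i) :
    ∃ t ⊆ s, LinearIndepOn 𝕜 v (t : Set ι) ∧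
      ∃ d : ι → 𝕜, (∀ i ∈ t, 0 ≤ d i) ∧ ∑ i ∈ t, d i • v i = ∑ i ∈ s, c i • v i := by
  classical
  induction s using Finset.strongInduction generalizing c with | H s ih =>
  by_cases hs : LinearIndepOn 𝕜 v (s : Set ι)
  · exact ⟨s, subset_rfl, hs, c, hc, rfl⟩
  obtain ⟨g, hg, hpos⟩ : ∃ g : ι → 𝕜, ∑ i ∈ s, g i • v i = 0 ∧ (s.filter (0 < g ·)).Nonempty := by
    obtain ⟨g, hg, i, his, hgi⟩ := not_linearIndepOn_finset_iff.mp hs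
    rcases hgi.lt_or_gt with hneg | hpos
    · exact ⟨-g, by simp [neg_smul, hg], i, by simp [his, hneg]⟩
    · exact ⟨g, hg, i, by simp [his, hpos]⟩
  -- move along the relation `g` until the first coefficient of `c` vanishes
  obtain ⟨j, hj, hjmin⟩ := (s.filter (0 < g ·)).exists_min_image (fun i => c i / g i) hpos
  simp only [Finset.mem_filter, and_imp] at hj hjmin
  set r := c j / g j
  have hc' : ∀ i ∈ s, 0 ≤ c i - r * g i := by
    intro i hi
    rcases le_or_gt (g i) 0 with hgi | hgi
    · nlinarith [hc i hi, div_nonneg (hc j hj.1) hj.2.le]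
    · have := hjmin i hi hgi
      rw [le_div_iff₀ hgi] at this
      linarith
  have hj0 : c j - r * g j = 0 := by rw [div_mul_cancel₀ _ hj.2.ne', sub_self]
  have hsum : ∑ i ∈ s.erase j, (c i - r * g i) • v i = ∑ i ∈ s, c i • v i := by
    rw [Finset.sum_erase _ (by rw [hj0, zero_smul])]
    simp_rw [sub_smul, Finset.sum_sub_distrib, mul_smul, ← Finset.smul_sum, hg, smul_zero,
      sub_zero]
  obtain ⟨t, hts, ht, d, hd, hdsum⟩ := ih (s.erase j) (Finset.erase_ssubset hj.1) _
    fun i hi => hc' i (Finset.mem_of_mem_erase hi)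
  exact ⟨t, hts.trans (Finset.erase_subset _ _), ht, d, hd, hdsum.trans hsum⟩

theorem PointedCone.mem_hull_range_iff [Fintype ι] {v : ι → E} {z : E} :
    z ∈ PointedCone.hull 𝕜 (Set.range v) ↔ ∃ c : ι → 𝕜, 0 ≤ c ∧ ∑ i, c i • v i = z := by
  rw [PointedCone.hull, Submodule.mem_span_range_iff_exists_fun]
  constructor
  · rintro ⟨c, rfl⟩
    exact ⟨fun i => c i, fun i => (c i).2, rfl⟩
  · rintro ⟨c, hc, rfl⟩
    exact ⟨fun i => ⟨c i, hc i⟩, rfl⟩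

end ConicCaratheodory

theorem PointedCone.isClosed_hull_range {ι E : Type*} [Finite ι] [AddCommGroup E] [Module ℝ E]
    [TopologicalSpace E] [IsTopologicalAddGroup E] [ContinuousSMul ℝ E] [T2Space E]
    (v : ι → E) : IsClosed (PointedCone.hull ℝ (Set.range v) : Set E) := by
  classical
  cases nonempty_fintype ι
  have hunion : (PointedCone.hull ℝ (Set.range v) : Set E) =
      ⋃ t ∈ {t : Finset ι | LinearIndepOn ℝ v (t : Set ι)},
        Fintype.linearCombination ℝ (fun i : t => v i) '' Set.Ici 0 := by
    ext z
    simp only [Set.mem_iUnion, Set.mem_image, Fintype.linearCombination_apply]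
    constructor
    · intro hz
      obtain ⟨c, hc, rfl⟩ := PointedCone.mem_hull_range_iff.mp hz
      obtain ⟨t, -, ht, d, hd, hsum⟩ :=
        exists_linearIndepOn_nonneg_sum_eq v Finset.univ c fun i _ => hc i
      exact ⟨t, ht, fun i => d i, fun i => hd i i.2, by rw [← hsum, ← t.sum_coe_sort]⟩
    · rintro ⟨t, -, d, hd, rfl⟩
      exact Submodule.sum_mem _ fun i _ =>
        PointedCone.smul_mem _ (hd i) (PointedCone.subset_hull ⟨i, rfl⟩)
  rw [hunion]
  refine (Set.toFinite _).isClosed_biUnion fun t ht => ?_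
  have hker := LinearMap.ker_eq_bot.mpr ht.linearIndependent.fintypeLinearCombination_injective
  exact (LinearMap.isClosedEmbedding_of_injective hker).isClosedMap _ isClosed_Ici

theorem Matrix.mulVec_eq_sum_smul_col {κ ι α : Type*} [Fintype ι] [CommSemiring α]
    (A : Matrix κ ι α) (x : ι → α) : A *ᵥ x = ∑ i, x i • Aᵀ i := by
  ext k
  simp [mulVec, dotProduct, mul_comm]

theorem Matrix.farkas {κ ι : Type*} [Fintype κ] [Fintype ι] (A : Matrix κ ι ℝ) (b : κ → ℝ)
    (h : ∀ x, A *ᵥ x = b → ¬ 0 ≤ x) : ∃ y, Aᵀ *ᵥ y ≤ 0 ∧ 0 < b ⬝ᵥ y := by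
  classical
  let C : ProperCone ℝ (κ → ℝ) :=
    ⟨PointedCone.hull ℝ (Set.range fun i => Aᵀ i), PointedCone.isClosed_hull_range _⟩
  have hbC : b ∉ C := by
    rintro hb
    obtain ⟨x, hx, hAx⟩ := PointedCone.mem_hull_range_iff.mp hb
    exact h x (by rw [mulVec_eq_sum_smul_col, hAx]) hx
  obtain ⟨f, hfC, hfb⟩ := C.hyperplane_separation_point hbC
  set yf : κ → ℝ := fun k => f fun j => if k = j then 1 else 0
  have hf : ∀ z, f z = z ⬝ᵥ yf := fun z => by
    simpa [dotProduct] using (f : (κ → ℝ) →ₗ[ℝ] ℝ).pi_apply_eq_sum_univ z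
  refine ⟨-yf, fun i => ?_, ?_⟩
  · have := hfC (Aᵀ i) (PointedCone.subset_hull ⟨i, rfl⟩)
    rw [hf] at this
    rw [mulVec_neg, Pi.neg_apply, Pi.zero_apply, neg_nonpos]
    exact this
  · rw [hf] at hfb
    simpa [dotProduct_neg] using hfb

namespace Matrix

variable {κ ι : Type*} [Fintype κ] (A : Matrix κ ι ℝ) (b : κ → ℝ) (c : ι → ℝ)

theorem exists_dual_ge_of_ray {y₀ y : κ → ℝ} (hy₀ : Aᵀ *ᵥ y₀ ≤ c) (hy : Aᵀ *ᵥ y ≤ 0)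
    (hby : 0 < b ⬝ᵥ y) (γ : ℝ) : ∃ y', Aᵀ *ᵥ y' ≤ c ∧ γ ≤ b ⬝ᵥ y' := by
  set t := |γ - b ⬝ᵥ y₀| / (b ⬝ᵥ y)
  have ht : 0 ≤ t := by positivity
  refine ⟨y₀ + t • y, ?_, ?_⟩
  · rw [mulVec_add, mulVec_smul, ← add_zero c]
    exact add_le_add hy₀ (smul_nonpos_of_nonneg_of_nonpos ht hy)
  · rw [dotProduct_add, dotProduct_smul, smul_eq_mul, div_mul_cancel₀ _ hby.ne']
    linarith [le_abs_self (γ - b ⬝ᵥ y₀)]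

variable [Fintype ι]

theorem dotProduct_le_of_primal_dual {x : ι → ℝ} {y : κ → ℝ} (hx : A *ᵥ x = b) (hx0 : 0 ≤ x)
    (hy : Aᵀ *ᵥ y ≤ c) : b ⬝ᵥ y ≤ c ⬝ᵥ x :=
  calc b ⬝ᵥ y = Aᵀ *ᵥ y ⬝ᵥ x := by
        rw [← hx, dotProduct_comm, dotProduct_mulVec, mulVec_transpose]
    _ ≤ c ⬝ᵥ x := dotProduct_le_dotProduct_of_nonneg_right hy hx0

theorem exists_farkas_certificate_of_forall_primal_gt (γ : ℝ)
    (hγ : ∀ x, A *ᵥ x = b → 0 ≤ x → γ < c ⬝ᵥ x) :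
    ∃ y τ, τ ≤ 0 ∧ Aᵀ *ᵥ y + τ • c ≤ 0 ∧ 0 < b ⬝ᵥ y + γ * τ := by
  let B : Matrix (κ ⊕ Unit) (ι ⊕ Unit) ℝ := fromBlocks A 0 (of fun _ => c) 1
  obtain ⟨w, hw, hbw⟩ := B.farkas (Sum.elim b fun _ => γ) fun z hz hz0 => by
    have hA : A *ᵥ (z ∘ Sum.inl) = b := funext fun k => by
      simpa [B, fromBlocks_mulVec] using congrFun hz (Sum.inl k)
    have hc : c ⬝ᵥ (z ∘ Sum.inl) + z (Sum.inr ()) = γ := by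
      simpa [B, fromBlocks_mulVec, mulVec, dotProduct] using congrFun hz (Sum.inr ())
    have := hγ _ hA fun i => hz0 (Sum.inl i)
    linarith [show 0 ≤ z (Sum.inr ()) from hz0 _]
  refine ⟨w ∘ Sum.inl, w (Sum.inr ()), ?_, fun i => ?_, ?_⟩
  · simpa [B, fromBlocks_transpose, fromBlocks_mulVec] using hw (Sum.inr ())
  · simpa [B, fromBlocks_transpose, fromBlocks_mulVec, mulVec, dotProduct, mul_comm]
      using hw (Sum.inl i)
  · simpa [dotProduct, Fintype.sum_sum_type] using hbw

theorem exists_dual_ge_of_forall_primal_gt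
    (hfeas : (∃ x, A *ᵥ x = b ∧ 0 ≤ x) ∨ ∃ y, Aᵀ *ᵥ y ≤ c) (γ : ℝ)
    (hγ : ∀ x, A *ᵥ x = b → 0 ≤ x → γ < c ⬝ᵥ x) : ∃ y, Aᵀ *ᵥ y ≤ c ∧ γ ≤ b ⬝ᵥ y := by
  obtain ⟨y, τ, hτ, hy, hby⟩ := exists_farkas_certificate_of_forall_primal_gt A b c γ hγ
  rcases hτ.lt_or_eq with hτ | rfl
  · have hτ' : 0 < -τ := neg_pos.mpr hτ
    refine ⟨(-τ)⁻¹ • y, fun i => ?_, ?_⟩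
    · have := hy i
      simp only [Pi.add_apply, Pi.smul_apply, smul_eq_mul, Pi.zero_apply] at this
      rw [mulVec_smul, Pi.smul_apply, smul_eq_mul, inv_mul_le_iff₀ hτ']
      linarith
    · rw [dotProduct_smul, smul_eq_mul, le_inv_mul_iff₀ hτ']
      linarith
  · rw [zero_smul, add_zero] at hy
    rw [mul_zero, add_zero] at hby
    rcases hfeas with ⟨x, hx, hx0⟩ | ⟨y₀, hy₀⟩
    · have := dotProduct_le_of_primal_dual A b 0 hx hx0 hy
      rw [zero_dotProduct] at this
      exact absurd hby this.not_gt
    · exact exists_dual_ge_of_ray A b c hy₀ hy hby γ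

noncomputable def lpPrimalValue : EReal :=
  sInf ((fun x => ((c ⬝ᵥ x : ℝ) : EReal)) '' {x | A *ᵥ x = b ∧ 0 ≤ x})

noncomputable def lpDualValue : EReal :=
  sSup ((fun y => ((b ⬝ᵥ y : ℝ) : EReal)) '' {y | Aᵀ *ᵥ y ≤ c})

theorem lpDualValue_le_lpPrimalValue : lpDualValue A b c ≤ lpPrimalValue A b c := by
  refine sSup_le ?_
  rintro _ ⟨y, hy, rfl⟩
  refine le_sInf ?_
  rintro _ ⟨x, ⟨hx, hx0⟩, rfl⟩
  exact EReal.coe_le_coe (dotProduct_le_of_primal_dual A b c hx hx0 hy)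

theorem lpPrimalValue_eq_lpDualValue
    (hfeas : (∃ x, A *ᵥ x = b ∧ 0 ≤ x) ∨ ∃ y, Aᵀ *ᵥ y ≤ c) :
    lpPrimalValue A b c = lpDualValue A b c := by
  refine le_antisymm (EReal.ge_of_forall_gt_iff_ge.mp fun γ hγ => ?_)
    (lpDualValue_le_lpPrimalValue A b c)
  obtain ⟨y, hy, hγy⟩ := exists_dual_ge_of_forall_primal_gt A b c hfeas γ fun x hx hx0 =>
    EReal.coe_lt_coe_iff.mp (hγ.trans_le (sInf_le ⟨x, ⟨hx, hx0⟩, rfl⟩))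
  exact (EReal.coe_le_coe hγy).trans (le_sSup ⟨y, hy, rfl⟩)

end Matrix

theorem worst_case_collapsed_dual_formulation_general (m n : ℕ)
    (Ahat : Matrix (Fin m) (Fin n) ℝ) (bhat : Fin m → ℝ) (chat : Fin n → ℝ)
    (U : Set ((Fin m → ℝ) × (Fin n → ℝ)))
    (hPD : ∀ bc ∈ U, (Pfeas m n Ahat bhat bc.1).Nonempty ∨
      (Dfeas m n Ahat chat bc.2).Nonempty) :
    sSup ((fun bc => pval m n Ahat bhat bc.1 chat bc.2) '' U) =
      sSup {e : EReal | ∃ b c y s, (b, c) ∈ U ∧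
        Ahat.transpose.mulVec y + s = chat + c ∧ 0 ≤ s ∧
        e = (((bhat + b) ⬝ᵥ y : ℝ) : EReal)} := by
  have hstrong : ∀ bc ∈ U, pval m n Ahat bhat bc.1 chat bc.2 =
      Ahat.lpDualValue (bhat + bc.1) (chat + bc.2) := fun bc hbc =>
    Ahat.lpPrimalValue_eq_lpDualValue _ _ <| (hPD bc hbc).imp id
      fun ⟨⟨y, s⟩, hys, hs⟩ => ⟨y, hys ▸ le_add_of_nonneg_right hs⟩
  have hdual : {e : EReal | ∃ b c y s, (b, c) ∈ U ∧ Ahat.transpose.mulVec y + s = chat + c ∧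
      0 ≤ s ∧ e = (((bhat + b) ⬝ᵥ y : ℝ) : EReal)} =
      ⋃ bc ∈ U, (fun y => (((bhat + bc.1) ⬝ᵥ y : ℝ) : EReal)) ''
        {y | Ahatᵀ *ᵥ y ≤ chat + bc.2} := by
    ext e
    simp only [Set.mem_iUnion, Set.mem_image]
    constructor
    · rintro ⟨b, c, y, s, hbc, hys, hs, rfl⟩
      exact ⟨(b, c), hbc, y, hys ▸ le_add_of_nonneg_right hs, rfl⟩
    · rintro ⟨⟨b, c⟩, hbc, y, hy, rfl⟩
      obtain ⟨s, hs, hys⟩ := exists_nonneg_add_of_le (show Ahatᵀ *ᵥ y ≤ chat + c from hy)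
      exact ⟨b, c, y, s, hbc, hys, hs, rfl⟩
  rw [Set.image_congr hstrong, hdual, sSup_image]
  simp_rw [sSup_iUnion]
  rfl

/-- Under Assumption 1 (the uncertainty set `U` is compact,
convex, and contains `(0,0)`), if for every `(b,c) ∈ U` at least one of `P(b)`
and `D(c)` is nonempty, then the worst-case value `p⁺ = sup{p(b,c) : (b,c) ∈ U}`
equals the optimal value of the collapsed dual bilinear program
`sup{(b̂+b)ᵀy : Âᵀy + s = ĉ+c, s ≥ 0, (b,c) ∈ U}`, as extended real numbers
(`sSup ∅ = −∞` in `EReal`). -/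
theorem worst_case_collapsed_dual_formulation (m n : ℕ)
    (Ahat : Matrix (Fin m) (Fin n) ℝ) (bhat : Fin m → ℝ) (chat : Fin n → ℝ)
    (U : Set ((Fin m → ℝ) × (Fin n → ℝ)))
    (hUcompact : IsCompact U) (hUconvex : Convex ℝ U) (hU0 : (0, 0) ∈ U)
    (hPD : ∀ bc ∈ U, (Pfeas m n Ahat bhat bc.1).Nonempty ∨
      (Dfeas m n Ahat chat bc.2).Nonempty) :
    sSup ((fun bc => pval m n Ahat bhat bc.1 chat bc.2) '' U) =
      sSup {e : EReal | ∃ b c y s, (b, c) ∈ U ∧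
        Ahat.transpose.mulVec y + s = chat + c ∧ 0 ≤ s ∧
        e = (((bhat + b) ⬝ᵥ y : ℝ) : EReal)} :=
  worst_case_collapsed_dual_formulation_general m n Ahat bhat chat U hPD
end

section
/- Under Assumptions 1 and 2, the best-case restricted value q^- is a finite real number: the set Ū is nonempty, p(b,c) is finite for every (b,c) ∈ Ū, and inf{p(b,c) : (b,c) ∈ Ū} > −∞. -/
open Matrix

/-- The restricted uncertainty set `Ū = {(b,c) ∈ U : P(b) ≠ ∅, D(c) ≠ ∅}`. -/
def Ubar (m n : ℕ) (Ahat : Matrix (Fin m) (Fin n) ℝ) (bhat : Fin m → ℝ)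
    (chat : Fin n → ℝ) (U : Set ((Fin m → ℝ) × (Fin n → ℝ))) :
    Set ((Fin m → ℝ) × (Fin n → ℝ)) :=
  {bc ∈ U | (Pfeas m n Ahat bhat bc.1).Nonempty ∧ (Dfeas m n Ahat chat bc.2).Nonempty}

/-! Each `p(b, c)` with `(b, c) ∈ Ū` is finite by weak duality. For the uniform lower bound,
write the feasible sets as fibres `C ∩ L⁻¹' {v}` of a linear map over a closed cone. All fibres
share the recession cone `C ∩ ker L`, so if one of them (`P(0)` or `D(0)`) is nonempty and
bounded, then `C ∩ ker L = 0`; compactness of the unit sphere of `C` then gives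
`δ ‖x‖ ≤ ‖L x‖` on `C`. Hence the primal (resp. dual) feasible points for all perturbations in
the bounded set `U` lie in one bounded set, on which the primal objective (resp. the dual
objective, a lower bound by weak duality) is bounded below. -/

open Bornology Set

theorem Bornology.IsBounded.image_of_continuous {α β : Type*} [PseudoMetricSpace α] [ProperSpace α]
    [PseudoMetricSpace β] {f : α → β} (hf : Continuous f) {s : Set α} (hs : IsBounded s) :
    IsBounded (f '' s) :=
  (hs.isCompact_closure.image hf).isBounded.subset (image_mono subset_closure)

theorem Matrix.bddBelow_image2_dotProduct {ι : Type*} [Fintype ι] {s t : Set (ι → ℝ)}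
    (hs : IsBounded s) (ht : IsBounded t) : BddBelow (image2 (· ⬝ᵥ ·) s t) := by
  rw [← image_prod]
  exact ((hs.prod ht).image_of_continuous (by fun_prop)).bddBelow

section Cone

variable {E F : Type*} [NormedAddCommGroup E] [NormedSpace ℝ E]
  [NormedAddCommGroup F] [NormedSpace ℝ F]

theorem eq_zero_of_forall_add_smul_mem_of_isBounded {S : Set E} (hS : IsBounded S) {x d : E}
    (h : ∀ t : ℝ, 0 ≤ t → x + t • d ∈ S) : d = 0 := by
  obtain ⟨R, hR⟩ := hS.exists_norm_le
  have hbound : ∀ t : ℝ, 0 ≤ t → t * ‖d‖ ≤ R + ‖x‖ := fun t ht =>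
    calc t * ‖d‖ = ‖(x + t • d) - x‖ := by
          rw [add_sub_cancel_left, norm_smul, Real.norm_of_nonneg ht]
      _ ≤ R + ‖x‖ := (norm_sub_le _ _).trans (by gcongr; exact hR _ (h t ht))
  by_contra hd
  have hd : 0 < ‖d‖ := norm_pos_iff.mpr hd
  have hR0 : 0 ≤ R + ‖x‖ := by simpa using hbound 0 le_rfl
  have := hbound ((R + ‖x‖ + 1) / ‖d‖) (by positivity)
  rw [div_mul_cancel₀ _ hd.ne'] at this
  linarith

theorem PointedCone.eq_zero_of_isBounded_inter_preimage (C : PointedCone ℝ E) (L : E →ₗ[ℝ] F)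
    {x : E} (hx : x ∈ C) (hbdd : IsBounded ((C : Set E) ∩ L ⁻¹' {L x}))
    {d : E} (hd : d ∈ C) (hLd : L d = 0) : d = 0 :=
  eq_zero_of_forall_add_smul_mem_of_isBounded hbdd fun t ht =>
    ⟨C.add_mem hx (C.smul_mem ht hd), by simp [hLd]⟩

variable [FiniteDimensional ℝ E]

theorem ProperCone.exists_pos_mul_norm_le_norm_map (C : ProperCone ℝ E) (L : E →ₗ[ℝ] F)
    (hker : ∀ x ∈ C, L x = 0 → x = 0) : ∃ δ > 0, ∀ x ∈ C, δ * ‖x‖ ≤ ‖L x‖ := by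
  have hsphere : IsCompact ((C : Set E) ∩ Metric.sphere 0 1) :=
    (isCompact_sphere 0 1).inter_left C.isClosed
  obtain ⟨δ, hδ, hδS⟩ := hsphere.exists_forall_le' (f := fun u => ‖L u‖)
    (L.continuous_of_finiteDimensional.norm.continuousOn) (a := 0) fun u ⟨huC, hu1⟩ =>
      norm_pos_iff.mpr fun hLu => by simp [hker u huC hLu] at hu1
  refine ⟨δ, hδ, fun x hxC => ?_⟩
  rcases eq_or_ne x 0 with rfl | hx
  · simp
  have hx : 0 < ‖x‖ := norm_pos_iff.mpr hx
  have := hδS (‖x‖⁻¹ • x) ⟨C.smul_mem hxC (by positivity), by simp [norm_smul, hx.ne']⟩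
  rw [map_smul, norm_smul, norm_inv, norm_norm, le_inv_mul_iff₀ hx] at this
  linarith

theorem ProperCone.isBounded_inter_preimage (C : ProperCone ℝ E) (L : E →ₗ[ℝ] F)
    (hker : ∀ x ∈ C, L x = 0 → x = 0) {B : Set F} (hB : IsBounded B) :
    IsBounded ((C : Set E) ∩ L ⁻¹' B) := by
  obtain ⟨δ, hδ, hδC⟩ := C.exists_pos_mul_norm_le_norm_map L hker
  obtain ⟨R, hR⟩ := hB.exists_norm_le
  exact isBounded_iff_forall_norm_le.2 ⟨R / δ, fun x ⟨hxC, hxB⟩ =>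
    (le_div_iff₀' hδ).2 ((hδC x hxC).trans (hR _ hxB))⟩

theorem ProperCone.isBounded_inter_preimage_of_isBounded_fiber (C : ProperCone ℝ E)
    (L : E →ₗ[ℝ] F) {x : E} (hx : x ∈ C)
    (hbdd : IsBounded ((C : Set E) ∩ L ⁻¹' {L x})) {B : Set F} (hB : IsBounded B) :
    IsBounded ((C : Set E) ∩ L ⁻¹' B) :=
  C.isBounded_inter_preimage L
    (fun _ hd hLd => C.toPointedCone.eq_zero_of_isBounded_inter_preimage L hx hbdd hd hLd) hB

end Cone

section LinearProgram

variable {m n : ℕ} {Ahat : Matrix (Fin m) (Fin n) ℝ} {bhat b : Fin m → ℝ} {chat c : Fin n → ℝ}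

theorem Pfeas_eq_inter_preimage :
    Pfeas m n Ahat bhat b =
      (ProperCone.positive ℝ (Fin n → ℝ) : Set (Fin n → ℝ)) ∩ Ahat.mulVecLin ⁻¹' {bhat + b} := by
  ext x
  simp [Pfeas, and_comm]

theorem Dfeas_eq_inter_preimage :
    Dfeas m n Ahat chat c =
      ((ProperCone.positive ℝ (Fin n → ℝ)).comap
          (ContinuousLinearMap.snd ℝ (Fin m → ℝ) (Fin n → ℝ)) : Set _) ∩
        (Ahatᵀ.mulVecLin.coprod LinearMap.id) ⁻¹' {chat + c} := by
  ext ys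
  simp [Dfeas, and_comm, mulVec_transpose]

theorem isBounded_biUnion_Pfeas (hP0 : (Pfeas m n Ahat bhat 0).Nonempty)
    (hPb : IsBounded (Pfeas m n Ahat bhat 0)) {B : Set (Fin m → ℝ)} (hB : IsBounded B) :
    IsBounded (⋃ b ∈ B, Pfeas m n Ahat bhat b) := by
  obtain ⟨x, hx⟩ := hP0
  rw [Pfeas_eq_inter_preimage] at hx hPb
  rw [← hx.2] at hPb
  refine (ProperCone.isBounded_inter_preimage_of_isBounded_fiber _ _ hx.1 hPb
    (hB.image_of_continuous (continuous_const_add bhat))).subset (iUnion₂_subset fun b hb => ?_)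
  rw [Pfeas_eq_inter_preimage]
  exact inter_subset_inter_right _ (preimage_mono (singleton_subset_iff.2 (mem_image_of_mem _ hb)))

theorem isBounded_biUnion_Dfeas (hD0 : (Dfeas m n Ahat chat 0).Nonempty)
    (hDb : IsBounded (Dfeas m n Ahat chat 0)) {B : Set (Fin n → ℝ)} (hB : IsBounded B) :
    IsBounded (⋃ c ∈ B, Dfeas m n Ahat chat c) := by
  obtain ⟨ys, hys⟩ := hD0
  rw [Dfeas_eq_inter_preimage] at hys hDb
  rw [← hys.2] at hDb
  refine (ProperCone.isBounded_inter_preimage_of_isBounded_fiber _ _ hys.1 hDb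
    (hB.image_of_continuous (continuous_const_add chat))).subset (iUnion₂_subset fun c hc => ?_)
  rw [Dfeas_eq_inter_preimage]
  exact inter_subset_inter_right _ (preimage_mono (singleton_subset_iff.2 (mem_image_of_mem _ hc)))

theorem dotProduct_le_dotProduct_of_mem_Pfeas_of_mem_Dfeas {x : Fin n → ℝ}
    {ys : (Fin m → ℝ) × (Fin n → ℝ)} (hx : x ∈ Pfeas m n Ahat bhat b)
    (hys : ys ∈ Dfeas m n Ahat chat c) : ys.1 ⬝ᵥ (bhat + b) ≤ (chat + c) ⬝ᵥ x := by
  have hgap : (chat + c) ⬝ᵥ x = ys.1 ⬝ᵥ (bhat + b) + ys.2 ⬝ᵥ x := by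
    rw [← hys.1, ← hx.1, add_dotProduct, mulVec_transpose, ← dotProduct_mulVec]
  linarith [dotProduct_nonneg_of_nonneg hys.2 hx.2]

theorem pval_le {x : Fin n → ℝ} (hx : x ∈ Pfeas m n Ahat bhat b) :
    pval m n Ahat bhat b chat c ≤ (((chat + c) ⬝ᵥ x : ℝ) : EReal) :=
  sInf_le (mem_image_of_mem _ hx)

theorem le_pval {lo : ℝ} (h : ∀ x ∈ Pfeas m n Ahat bhat b, lo ≤ (chat + c) ⬝ᵥ x) :
    (lo : EReal) ≤ pval m n Ahat bhat b chat c :=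
  le_sInf (forall_mem_image.2 fun x hx => EReal.coe_le_coe_iff.2 (h x hx))

theorem exists_pval_eq_coe {x : Fin n → ℝ} {ys : (Fin m → ℝ) × (Fin n → ℝ)}
    (hx : x ∈ Pfeas m n Ahat bhat b) (hys : ys ∈ Dfeas m n Ahat chat c) :
    ∃ v : ℝ, pval m n Ahat bhat b chat c = v := by
  have hlo : ((ys.1 ⬝ᵥ (bhat + b) : ℝ) : EReal) ≤ pval m n Ahat bhat b chat c :=
    le_pval fun _ hx' => dotProduct_le_dotProduct_of_mem_Pfeas_of_mem_Dfeas hx' hys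
  exact ⟨_, (EReal.coe_toReal ((pval_le hx).trans_lt (EReal.coe_lt_top _)).ne
    ((EReal.bot_lt_coe _).trans_le hlo).ne').symm⟩

variable {U : Set ((Fin m → ℝ) × (Fin n → ℝ))}

theorem exists_forall_le_pval_of_isBounded_Pfeas (hU : IsBounded U)
    (hP0 : (Pfeas m n Ahat bhat 0).Nonempty) (hPb : IsBounded (Pfeas m n Ahat bhat 0)) :
    ∃ lo : ℝ, ∀ bc ∈ U, (lo : EReal) ≤ pval m n Ahat bhat bc.1 chat bc.2 := by
  obtain ⟨lo, hlo⟩ := bddBelow_image2_dotProduct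
    (hU.image_of_continuous (f := fun bc => chat + bc.2) (by fun_prop))
    (isBounded_biUnion_Pfeas hP0 hPb hU.image_fst)
  exact ⟨lo, fun bc hbc => le_pval fun x hx =>
    hlo (mem_image2_of_mem (mem_image_of_mem _ hbc) (mem_biUnion (mem_image_of_mem _ hbc) hx))⟩

theorem exists_forall_le_pval_of_isBounded_Dfeas (hU : IsBounded U)
    (hD0 : (Dfeas m n Ahat chat 0).Nonempty) (hDb : IsBounded (Dfeas m n Ahat chat 0)) :
    ∃ lo : ℝ, ∀ bc ∈ U, (Dfeas m n Ahat chat bc.2).Nonempty →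
      (lo : EReal) ≤ pval m n Ahat bhat bc.1 chat bc.2 := by
  obtain ⟨lo, hlo⟩ := bddBelow_image2_dotProduct
    (isBounded_biUnion_Dfeas hD0 hDb hU.image_snd).image_fst
    (hU.image_of_continuous (f := fun bc => bhat + bc.1) (by fun_prop))
  refine ⟨lo, fun bc hbc ⟨ys, hys⟩ => le_pval fun x hx => le_trans ?_
    (dotProduct_le_dotProduct_of_mem_Pfeas_of_mem_Dfeas hx hys)⟩
  exact hlo (mem_image2_of_mem (mem_image_of_mem _ (mem_biUnion (mem_image_of_mem _ hbc) hys))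
    (mem_image_of_mem _ hbc))

theorem exists_forall_le_pval (hU : IsBounded U) (hP0 : (Pfeas m n Ahat bhat 0).Nonempty)
    (hD0 : (Dfeas m n Ahat chat 0).Nonempty)
    (hbdd : IsBounded (Pfeas m n Ahat bhat 0) ∨ IsBounded (Dfeas m n Ahat chat 0)) :
    ∃ lo : ℝ, ∀ bc ∈ Ubar m n Ahat bhat chat U,
      (lo : EReal) ≤ pval m n Ahat bhat bc.1 chat bc.2 := by
  rcases hbdd with hPb | hDb
  · obtain ⟨lo, hlo⟩ := exists_forall_le_pval_of_isBounded_Pfeas (chat := chat) hU hP0 hPb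
    exact ⟨lo, fun bc hbc => hlo bc hbc.1⟩
  · obtain ⟨lo, hlo⟩ := exists_forall_le_pval_of_isBounded_Dfeas (bhat := bhat) hU hD0 hDb
    exact ⟨lo, fun bc hbc => hlo bc hbc.1 hbc.2.2⟩

end LinearProgram

theorem q_minus_finite_general (m n : ℕ)
    (Ahat : Matrix (Fin m) (Fin n) ℝ) (bhat : Fin m → ℝ) (chat : Fin n → ℝ)
    (U : Set ((Fin m → ℝ) × (Fin n → ℝ)))
    (hUcompact : IsCompact U) (hU0 : (0, 0) ∈ U)
    (hP0 : (Pfeas m n Ahat bhat 0).Nonempty) (hD0 : (Dfeas m n Ahat chat 0).Nonempty)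
    (hbdd : Bornology.IsBounded (Pfeas m n Ahat bhat 0) ∨
      Bornology.IsBounded (Dfeas m n Ahat chat 0)) :
    (Ubar m n Ahat bhat chat U).Nonempty ∧
    (∀ bc ∈ Ubar m n Ahat bhat chat U,
      ∃ v : ℝ, pval m n Ahat bhat bc.1 chat bc.2 = (v : EReal)) ∧
    ⊥ < sInf ((fun bc => pval m n Ahat bhat bc.1 chat bc.2) ''
        Ubar m n Ahat bhat chat U) := by
  obtain ⟨lo, hlo⟩ := exists_forall_le_pval hUcompact.isBounded hP0 hD0 hbdd
  refine ⟨⟨(0, 0), hU0, hP0, hD0⟩, fun bc hbc => ?_, ?_⟩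
  · obtain ⟨x, hx⟩ := hbc.2.1
    obtain ⟨ys, hys⟩ := hbc.2.2
    exact exists_pval_eq_coe hx hys
  · exact (EReal.bot_lt_coe lo).trans_le (le_sInf (forall_mem_image.2 hlo))

/-- Under Assumption 1 (`U` compact, convex, containing `(0,0)`)
and Assumption 2 (`P(0)` and `D(0)` nonempty, at least one of them bounded),
the best-case restricted value `q⁻ = inf{p(b,c) : (b,c) ∈ Ū}` is a finite real
number: `Ū` is nonempty, `p(b,c)` is finite for every `(b,c) ∈ Ū`, and the
infimum is greater than `−∞`. -/
theorem q_minus_finite (m n : ℕ)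
    (Ahat : Matrix (Fin m) (Fin n) ℝ) (bhat : Fin m → ℝ) (chat : Fin n → ℝ)
    (U : Set ((Fin m → ℝ) × (Fin n → ℝ)))
    (hUcompact : IsCompact U) (hUconvex : Convex ℝ U) (hU0 : (0, 0) ∈ U)
    (hP0 : (Pfeas m n Ahat bhat 0).Nonempty) (hD0 : (Dfeas m n Ahat chat 0).Nonempty)
    (hbdd : Bornology.IsBounded (Pfeas m n Ahat bhat 0) ∨
      Bornology.IsBounded (Dfeas m n Ahat chat 0)) :
    (Ubar m n Ahat bhat chat U).Nonempty ∧
    (∀ bc ∈ Ubar m n Ahat bhat chat U,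
      ∃ v : ℝ, pval m n Ahat bhat bc.1 chat bc.2 = (v : EReal)) ∧
    ⊥ < sInf ((fun bc => pval m n Ahat bhat bc.1 chat bc.2) ''
        Ubar m n Ahat bhat chat U) :=
  q_minus_finite_general m n Ahat bhat chat U hUcompact hU0 hP0 hD0 hbdd
end

section
/- Under Assumptions 1 and 2, the worst-case restricted value q^+ is a finite real number: the set Ū is nonempty, p(b,c) is finite for every (b,c) ∈ Ū, and sup{p(b,c) : (b,c) ∈ Ū} < +∞. -/
open Matrix

/-- Weak duality: any dual feasible point's objective bounds any primal feasible one's. -/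
lemma weak_duality_aux {m n : ℕ} {Ahat : Matrix (Fin m) (Fin n) ℝ} {bhat b : Fin m → ℝ}
    {chat c : Fin n → ℝ} {x : Fin n → ℝ} {ys : (Fin m → ℝ) × (Fin n → ℝ)}
    (hx : x ∈ Pfeas m n Ahat bhat b) (hys : ys ∈ Dfeas m n Ahat chat c) :
    (bhat + b) ⬝ᵥ ys.1 ≤ (chat + c) ⬝ᵥ x := by
  obtain ⟨hx1, hx2⟩ := hx
  obtain ⟨hy1, hy2⟩ := hys
  have h1 : (chat + c) ⬝ᵥ x = (Ahatᵀ *ᵥ ys.1) ⬝ᵥ x + ys.2 ⬝ᵥ x := by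
    rw [← hy1, add_dotProduct]
  have h2 : (Ahatᵀ *ᵥ ys.1) ⬝ᵥ x = (bhat + b) ⬝ᵥ ys.1 := by
    rw [Matrix.mulVec_transpose, ← Matrix.dotProduct_mulVec, hx1, dotProduct_comm]
  have h3 : (0:ℝ) ≤ ys.2 ⬝ᵥ x := Finset.sum_nonneg fun i _ => mul_nonneg (hy2 i) (hx2 i)
  linarith

lemma dot_abs_le_aux {n : ℕ} (v w : Fin n → ℝ) : |v ⬝ᵥ w| ≤ n * (‖v‖ * ‖w‖) := by
  calc |v ⬝ᵥ w| ≤ ∑ i, |v i * w i| := Finset.abs_sum_le_sum_abs _ _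
    _ ≤ ∑ _i : Fin n, ‖v‖ * ‖w‖ := Finset.sum_le_sum fun i _ => by
        rw [abs_mul]
        exact mul_le_mul (by simpa using norm_le_pi_norm v i)
          (by simpa using norm_le_pi_norm w i) (abs_nonneg _) (norm_nonneg _)
    _ = n * (‖v‖ * ‖w‖) := by simp [Finset.sum_const, Finset.card_univ]

lemma pval_le_of_mem_aux {m n : ℕ} {Ahat : Matrix (Fin m) (Fin n) ℝ} {bhat b : Fin m → ℝ}
    {chat c : Fin n → ℝ} {x : Fin n → ℝ} (hx : x ∈ Pfeas m n Ahat bhat b) :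
    pval m n Ahat bhat b chat c ≤ (((chat + c) ⬝ᵥ x : ℝ) : EReal) :=
  sInf_le ⟨x, hx, rfl⟩

/-- If `P(0)` is nonempty and bounded, `‖Âx‖` dominates `‖x‖` on the nonnegative orthant. -/
lemma primal_coercive_aux {m n : ℕ} {Ahat : Matrix (Fin m) (Fin n) ℝ} {bhat : Fin m → ℝ}
    (hP0 : (Pfeas m n Ahat bhat 0).Nonempty)
    (hbdd : Bornology.IsBounded (Pfeas m n Ahat bhat 0)) :
    ∃ ε : ℝ, 0 < ε ∧ ∀ x : Fin n → ℝ, 0 ≤ x → ε * ‖x‖ ≤ ‖Ahat *ᵥ x‖ := by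
  obtain ⟨x0, hx0⟩ := hP0
  obtain ⟨C, hC⟩ := isBounded_iff_forall_norm_le.1 hbdd
  have hC0 : 0 ≤ C := le_trans (norm_nonneg _) (hC _ hx0)
  have hrec : ∀ d : Fin n → ℝ, 0 ≤ d → Ahat *ᵥ d = 0 → d = 0 := by
    intro d hd hAd
    by_contra hne
    have hdpos : 0 < ‖d‖ := norm_pos_iff.2 hne
    set t := (C + ‖x0‖ + 1) / ‖d‖ with ht_def
    have ht : 0 ≤ t := div_nonneg (by linarith [norm_nonneg x0]) hdpos.le
    have hmem : x0 + t • d ∈ Pfeas m n Ahat bhat 0 := by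
      refine ⟨?_, ?_⟩
      · rw [Matrix.mulVec_add, Matrix.mulVec_smul, hAd, smul_zero, add_zero]
        exact hx0.1
      · intro i
        simp only [Pi.add_apply, Pi.smul_apply, smul_eq_mul, Pi.zero_apply]
        have := hx0.2 i
        have := hd i
        simp only [Pi.zero_apply] at *
        nlinarith
    have h1 := hC _ hmem
    have h2 : ‖t • d‖ ≤ ‖x0 + t • d‖ + ‖x0‖ := by
      have := norm_sub_le (x0 + t • d) x0
      rw [add_sub_cancel_left] at this
      linarith
    have h3 : ‖t • d‖ = t * ‖d‖ := by
      rw [norm_smul, Real.norm_eq_abs, abs_of_nonneg ht]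
    have h4 : t * ‖d‖ = C + ‖x0‖ + 1 := div_mul_cancel₀ _ hdpos.ne'
    linarith
  have hAcont : Continuous fun x : Fin n → ℝ => Ahat *ᵥ x := by
    have : (fun x : Fin n → ℝ => Ahat *ᵥ x) = fun x => Ahat.mulVecLin x := rfl
    rw [this]
    exact Ahat.mulVecLin.continuous_of_finiteDimensional
  set S := {x : Fin n → ℝ | 0 ≤ x} ∩ Metric.sphere 0 1 with hS_def
  have hSclosed : IsClosed S := by
    refine IsClosed.inter ?_ (Metric.isClosed_sphere)
    have : {x : Fin n → ℝ | 0 ≤ x} = ⋂ i, {x : Fin n → ℝ | 0 ≤ x i} := by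
      ext x; simp [Pi.le_def]
    rw [this]
    exact isClosed_iInter fun i => isClosed_le continuous_const (continuous_apply i)
  have hScompact : IsCompact S :=
    (isCompact_sphere (0 : Fin n → ℝ) 1).of_isClosed_subset hSclosed Set.inter_subset_right
  by_cases hS : S.Nonempty
  · obtain ⟨z, hzS, hz⟩ := hScompact.exists_isMinOn hS (hAcont.norm.continuousOn)
    have hz1 : ‖z‖ = 1 := by simpa using hzS.2
    refine ⟨‖Ahat *ᵥ z‖, ?_, ?_⟩
    · rcases (norm_nonneg (Ahat *ᵥ z)).lt_or_eq with h | h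
      · exact h
      · exfalso
        have : Ahat *ᵥ z = 0 := by rw [← norm_eq_zero, ← h]
        have hz0 := hrec z hzS.1 this
        rw [hz0] at hz1
        simp at hz1
    · intro x hx
      rcases eq_or_ne x 0 with rfl | hne
      · simp
      · have hxn : 0 < ‖x‖ := norm_pos_iff.2 hne
        have hmem : ‖x‖⁻¹ • x ∈ S := by
          constructor
          · intro i
            simp only [Pi.smul_apply, smul_eq_mul, Pi.zero_apply]
            exact mul_nonneg (inv_nonneg.2 hxn.le) (hx i)
          · simp [norm_smul, abs_of_nonneg (inv_nonneg.2 hxn.le), inv_mul_cancel₀ hxn.ne']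
        have hle : ‖Ahat *ᵥ z‖ ≤ ‖Ahat *ᵥ (‖x‖⁻¹ • x)‖ := hz hmem
        rw [Matrix.mulVec_smul, norm_smul, Real.norm_eq_abs,
          abs_of_nonneg (inv_nonneg.2 hxn.le)] at hle
        calc ‖Ahat *ᵥ z‖ * ‖x‖ ≤ (‖x‖⁻¹ * ‖Ahat *ᵥ x‖) * ‖x‖ := by nlinarith
          _ = ‖Ahat *ᵥ x‖ := by field_simp
  · refine ⟨1, one_pos, fun x hx => ?_⟩
    rcases eq_or_ne x 0 with rfl | hne
    · simp
    · exfalso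
      have hxn : 0 < ‖x‖ := norm_pos_iff.2 hne
      refine hS ⟨‖x‖⁻¹ • x, ?_, ?_⟩
      · intro i
        simp only [Pi.smul_apply, smul_eq_mul, Pi.zero_apply]
        exact mul_nonneg (inv_nonneg.2 hxn.le) (hx i)
      · simp [norm_smul, abs_of_nonneg (inv_nonneg.2 hxn.le), inv_mul_cancel₀ hxn.ne']

/-- If `D(0)` is nonempty and bounded then the dual recession cone is trivial. -/
lemma dual_rec_aux {m n : ℕ} {Ahat : Matrix (Fin m) (Fin n) ℝ} {chat : Fin n → ℝ}
    (hD0 : (Dfeas m n Ahat chat 0).Nonempty)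
    (hbdd : Bornology.IsBounded (Dfeas m n Ahat chat 0)) :
    ∀ y : Fin m → ℝ, Ahatᵀ *ᵥ y ≤ 0 → y = 0 := by
  obtain ⟨ys0, hys0⟩ := hD0
  obtain ⟨C, hC⟩ := isBounded_iff_forall_norm_le.1 hbdd
  have hC0 : 0 ≤ C := le_trans (norm_nonneg _) (hC _ hys0)
  intro y hy
  by_contra hne
  have hypos : 0 < ‖y‖ := norm_pos_iff.2 hne
  set t := (C + ‖ys0.1‖ + 1) / ‖y‖ with ht_def
  have ht : 0 ≤ t := div_nonneg (by linarith [norm_nonneg ys0.1]) hypos.le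
  have hmem : (ys0.1 + t • y, ys0.2 - t • (Ahatᵀ *ᵥ y)) ∈ Dfeas m n Ahat chat 0 := by
    constructor
    · show Ahatᵀ *ᵥ (ys0.1 + t • y) + (ys0.2 - t • (Ahatᵀ *ᵥ y)) = chat + 0
      rw [Matrix.mulVec_add, Matrix.mulVec_smul]
      have h1 : Ahatᵀ *ᵥ ys0.1 + ys0.2 = chat + 0 := hys0.1
      rw [← h1]
      abel
    · intro i
      simp only [Pi.sub_apply, Pi.smul_apply, smul_eq_mul, Pi.zero_apply]
      have h2 := hys0.2 i
      simp only [Pi.zero_apply] at h2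
      have h3 : (Ahatᵀ *ᵥ y) i ≤ 0 := hy i
      nlinarith
  have h1 := hC _ hmem
  have h1' : ‖ys0.1 + t • y‖ ≤ C :=
    le_trans (norm_fst_le (ys0.1 + t • y, ys0.2 - t • (Ahatᵀ *ᵥ y))) h1
  have h2 : ‖t • y‖ ≤ ‖ys0.1 + t • y‖ + ‖ys0.1‖ := by
    have := norm_sub_le (ys0.1 + t • y) ys0.1
    rw [add_sub_cancel_left] at this
    linarith
  have h3 : ‖t • y‖ = t * ‖y‖ := by
    rw [norm_smul, Real.norm_eq_abs, abs_of_nonneg ht]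
  have h4 : t * ‖y‖ = C + ‖ys0.1‖ + 1 := div_mul_cancel₀ _ hypos.ne'
  linarith

/-- If `D(0)` is nonempty and bounded then the cone generated by the columns of `Â`
is all of `ℝ^m`. -/
lemma cone_surj_aux {m n : ℕ} {Ahat : Matrix (Fin m) (Fin n) ℝ} {chat : Fin n → ℝ}
    (hD0 : (Dfeas m n Ahat chat 0).Nonempty)
    (hbdd : Bornology.IsBounded (Dfeas m n Ahat chat 0)) :
    ∀ w : Fin m → ℝ, ∃ x : Fin n → ℝ, 0 ≤ x ∧ Ahat *ᵥ x = w := by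
  have hdual := dual_rec_aux hD0 hbdd
  set K := {v : Fin m → ℝ | ∃ x : Fin n → ℝ, 0 ≤ x ∧ Ahat *ᵥ x = v} with hK_def
  have hKconv : Convex ℝ K := by
    rintro v1 ⟨x1, hx1, rfl⟩ v2 ⟨x2, hx2, rfl⟩ a b ha hb hab
    refine ⟨a • x1 + b • x2, ?_, ?_⟩
    · exact add_nonneg (smul_nonneg ha hx1) (smul_nonneg hb hx2)
    · rw [Matrix.mulVec_add, Matrix.mulVec_smul, Matrix.mulVec_smul]
  have hK0 : (0 : Fin m → ℝ) ∈ K := ⟨0, le_refl _, by simp⟩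
  have hKcone : ∀ v ∈ K, ∀ t : ℝ, 0 ≤ t → t • v ∈ K := by
    rintro v ⟨x, hx, rfl⟩ t ht
    exact ⟨t • x, smul_nonneg ht hx, Matrix.mulVec_smul _ _ _⟩
  have hclos : closure K = Set.univ := by
    rw [Set.eq_univ_iff_forall]
    intro w
    by_contra hw
    obtain ⟨f, u, hfu, huw⟩ :=
      geometric_hahn_banach_closed_point (hKconv.closure) isClosed_closure hw
    have hu : 0 < u := by
      have := hfu 0 (subset_closure hK0)
      simpa using this
    have hfle : ∀ v ∈ K, f v ≤ 0 := by
      intro v hv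
      by_contra hpos
      push_neg at hpos
      have ht : (0:ℝ) < (u + 1) / f v := div_pos (by linarith) hpos
      have := hfu _ (subset_closure (hKcone v hv _ ht.le))
      rw [f.map_smul, smul_eq_mul, div_mul_cancel₀ _ hpos.ne'] at this
      linarith
    set y : Fin m → ℝ := fun i => f (Pi.single i 1) with hy_def
    have hfv : ∀ v : Fin m → ℝ, f v = v ⬝ᵥ y := by
      intro v
      have hv : v = ∑ i, v i • (Pi.single i 1 : Fin m → ℝ) := by
        funext j
        simp [Finset.sum_apply, Pi.single_apply]
      calc f v = f (∑ i, v i • (Pi.single i 1 : Fin m → ℝ)) := by rw [← hv]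
        _ = ∑ i, v i * f (Pi.single i 1) := by
            rw [map_sum]
            simp [smul_eq_mul]
        _ = v ⬝ᵥ y := rfl
    have hyle : Ahatᵀ *ᵥ y ≤ 0 := by
      intro j
      have hcol : Ahat *ᵥ Pi.single j 1 ∈ K := by
        refine ⟨Pi.single j 1, ?_, rfl⟩
        intro i
        simp only [Pi.zero_apply]
        by_cases h : i = j <;> simp [Pi.single_apply, h]
      have hle := hfle _ hcol
      rw [hfv] at hle
      have : (Ahat *ᵥ Pi.single j 1) ⬝ᵥ y = (Ahatᵀ *ᵥ y) j := by
        rw [Matrix.mulVec_single_one]; rfl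
      rwa [this] at hle
    have hy0 : y = 0 := hdual y hyle
    rw [hfv w, hy0] at huw
    simp [dotProduct] at huw
    linarith
  have haff : affineSpan ℝ K = ⊤ := by
    have h1 : closure K ⊆ (affineSpan ℝ K : Set (Fin m → ℝ)) :=
      closure_minimal (subset_affineSpan ℝ K)
        (affineSpan ℝ K).closed_of_finiteDimensional
    rw [hclos] at h1
    exact eq_top_iff.2 fun p _ => h1 (Set.mem_univ p)
  obtain ⟨z, hz⟩ := (hKconv.interior_nonempty_iff_affineSpan_eq_top).2 haff
  intro w
  have h2 : (2:ℝ) • w - z ∈ closure K := by rw [hclos]; trivial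
  have hmem := hKconv.combo_interior_closure_mem_interior hz h2
    (by norm_num : (0:ℝ) < 1/2) (by norm_num : (0:ℝ) ≤ 1/2) (by norm_num)
  have heq : (1/2 : ℝ) • z + (1/2 : ℝ) • ((2:ℝ) • w - z) = w := by module
  rw [heq] at hmem
  have hwK : w ∈ K := interior_subset hmem
  exact hwK

/-- A continuous nonnegative right inverse selection for `x ↦ Âx`. -/
lemma cont_selection_aux {m n : ℕ} (Ahat : Matrix (Fin m) (Fin n) ℝ)
    (hsurj : ∀ w : Fin m → ℝ, ∃ x : Fin n → ℝ, 0 ≤ x ∧ Ahat *ᵥ x = w) :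
    ∃ xsel : (Fin m → ℝ) → (Fin n → ℝ), Continuous xsel ∧
      ∀ b, 0 ≤ xsel b ∧ Ahat *ᵥ xsel b = b := by
  choose u hu hAu using fun j => hsurj (Pi.single j 1)
  choose v hv hAv using fun j => hsurj (-(Pi.single j 1))
  refine ⟨fun b => ∑ j, (max (b j) 0 • u j + max (-(b j)) 0 • v j), ?_, fun b => ⟨?_, ?_⟩⟩
  · refine continuous_finset_sum _ fun j _ => ?_
    exact (((continuous_apply j).max continuous_const).smul continuous_const).add
      ((((continuous_apply j).neg).max continuous_const).smul continuous_const)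
  · exact Finset.sum_nonneg fun j _ => add_nonneg
      (smul_nonneg (le_max_right _ _) (hu j)) (smul_nonneg (le_max_right _ _) (hv j))
  · have hlin : ∀ w : Fin n → ℝ, Ahat *ᵥ w = Ahat.mulVecLin w := fun _ => rfl
    rw [hlin, map_sum]
    have : ∀ j, Ahat.mulVecLin (max (b j) 0 • u j + max (-(b j)) 0 • v j)
        = Pi.single j (b j) := by
      intro j
      rw [map_add, LinearMap.map_smul, LinearMap.map_smul]
      have h1 : Ahat.mulVecLin (u j) = Pi.single j 1 := by rw [Matrix.mulVecLin_apply, hAu]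
      have h2 : Ahat.mulVecLin (v j) = -(Pi.single j 1) := by rw [Matrix.mulVecLin_apply, hAv]
      rw [h1, h2, smul_neg, ← sub_eq_add_neg, ← sub_smul]
      have h3 : max (b j) 0 - max (-(b j)) 0 = b j := by
        rcases le_total (b j) 0 with h | h
        · rw [max_eq_right h, max_eq_left (by linarith)]; ring
        · rw [max_eq_left h, max_eq_right (by linarith)]; ring
      rw [h3]
      funext i
      by_cases h : i = j <;> simp [Pi.single_apply, h]
    simp_rw [this]
    funext i
    simp [Finset.sum_apply, Pi.single_apply]

/-- Under Assumption 1 (`U` compact, convex, containing `(0,0)`)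
and Assumption 2 (`P(0)` and `D(0)` nonempty, at least one of them bounded),
the worst-case restricted value `q⁺ = sup{p(b,c) : (b,c) ∈ Ū}` is a finite real
number: `Ū` is nonempty, `p(b,c)` is finite for every `(b,c) ∈ Ū`, and the
supremum is less than `+∞`. -/
theorem q_plus_finite (m n : ℕ)
    (Ahat : Matrix (Fin m) (Fin n) ℝ) (bhat : Fin m → ℝ) (chat : Fin n → ℝ)
    (U : Set ((Fin m → ℝ) × (Fin n → ℝ)))
    (hUcompact : IsCompact U) (hUconvex : Convex ℝ U) (hU0 : (0, 0) ∈ U)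
    (hP0 : (Pfeas m n Ahat bhat 0).Nonempty) (hD0 : (Dfeas m n Ahat chat 0).Nonempty)
    (hbdd : Bornology.IsBounded (Pfeas m n Ahat bhat 0) ∨
      Bornology.IsBounded (Dfeas m n Ahat chat 0)) :
    (Ubar m n Ahat bhat chat U).Nonempty ∧
    (∀ bc ∈ Ubar m n Ahat bhat chat U,
      ∃ v : ℝ, pval m n Ahat bhat bc.1 chat bc.2 = (v : EReal)) ∧
    sSup ((fun bc => pval m n Ahat bhat bc.1 chat bc.2) ''
        Ubar m n Ahat bhat chat U) < ⊤ := by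
  have hne : (Ubar m n Ahat bhat chat U).Nonempty := ⟨(0, 0), hU0, hP0, hD0⟩
  have hfin : ∀ bc ∈ Ubar m n Ahat bhat chat U,
      ∃ v : ℝ, pval m n Ahat bhat bc.1 chat bc.2 = (v : EReal) := by
    rintro bc ⟨hbcU, ⟨x, hx⟩, ⟨ys, hys⟩⟩
    have hub := pval_le_of_mem_aux (chat := chat) (c := bc.2) hx
    have hlb : (((bhat + bc.1) ⬝ᵥ ys.1 : ℝ) : EReal) ≤ pval m n Ahat bhat bc.1 chat bc.2 := by
      refine le_sInf ?_
      rintro _ ⟨x', hx', rfl⟩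
      show (((bhat + bc.1) ⬝ᵥ ys.1 : ℝ) : EReal) ≤ (((chat + bc.2) ⬝ᵥ x' : ℝ) : EReal)
      exact_mod_cast weak_duality_aux hx' hys
    have hnt : pval m n Ahat bhat bc.1 chat bc.2 ≠ ⊤ :=
      (lt_of_le_of_lt hub (EReal.coe_lt_top _)).ne
    have hnb : pval m n Ahat bhat bc.1 chat bc.2 ≠ ⊥ :=
      (lt_of_lt_of_le (EReal.bot_lt_coe _) hlb).ne'
    exact ⟨(pval m n Ahat bhat bc.1 chat bc.2).toReal, (EReal.coe_toReal hnt hnb).symm⟩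
  have hM : ∃ M : ℝ, ∀ bc ∈ Ubar m n Ahat bhat chat U,
      pval m n Ahat bhat bc.1 chat bc.2 ≤ (M : EReal) := by
    obtain ⟨CU, hCU⟩ := isBounded_iff_forall_norm_le.1 hUcompact.isBounded
    have hCU0 : 0 ≤ CU := le_trans (norm_nonneg _) (hCU _ hU0)
    rcases hbdd with hbddP | hbddD
    · -- Case A: P(0) bounded
      obtain ⟨ε, hε, hbound⟩ := primal_coercive_aux hP0 hbddP
      refine ⟨n * ((‖chat‖ + CU) * ((‖bhat‖ + CU) / ε)), ?_⟩
      rintro ⟨b, c⟩ ⟨hbcU, ⟨x, hx⟩, -⟩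
      have hb1 : ‖b‖ ≤ CU := le_trans (norm_fst_le (b, c)) (hCU _ hbcU)
      have hc1 : ‖c‖ ≤ CU := le_trans (norm_snd_le (b, c)) (hCU _ hbcU)
      have hxb : ‖x‖ ≤ (‖bhat‖ + CU) / ε := by
        have h1 := hbound x hx.2
        rw [hx.1] at h1
        have h2 : ‖bhat + b‖ ≤ ‖bhat‖ + CU := le_trans (norm_add_le _ _) (by linarith)
        rw [le_div_iff₀ hε]
        nlinarith
      have hcost : (chat + c) ⬝ᵥ x ≤ n * ((‖chat‖ + CU) * ((‖bhat‖ + CU) / ε)) := by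
        have h1 := dot_abs_le_aux (chat + c) x
        have h2 : ‖chat + c‖ ≤ ‖chat‖ + CU := le_trans (norm_add_le _ _) (by linarith)
        have h3 : (0:ℝ) ≤ ‖x‖ := norm_nonneg _
        have h4 : (0:ℝ) ≤ ‖chat + c‖ := norm_nonneg _
        have h5 : (chat + c) ⬝ᵥ x ≤ |(chat + c) ⬝ᵥ x| := le_abs_self _
        have h6 : ‖chat + c‖ * ‖x‖ ≤ (‖chat‖ + CU) * ((‖bhat‖ + CU) / ε) := by nlinarith
        have h7 : (n:ℝ) * (‖chat + c‖ * ‖x‖) ≤ n * ((‖chat‖ + CU) * ((‖bhat‖ + CU) / ε)) := by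
          have : (0:ℝ) ≤ (n:ℝ) := Nat.cast_nonneg n
          nlinarith
        linarith
      exact le_trans (pval_le_of_mem_aux hx) (by exact_mod_cast hcost)
    · -- Case B: D(0) bounded
      obtain ⟨xsel, hxselcont, hxsel⟩ := cont_selection_aux Ahat (cone_surj_aux hD0 hbddD)
      set g : ((Fin m → ℝ) × (Fin n → ℝ)) → ℝ :=
        fun bc => (chat + bc.2) ⬝ᵥ xsel (bhat + bc.1) with hg_def
      have hgcont : Continuous g := by
        have hx1 : Continuous fun bc : (Fin m → ℝ) × (Fin n → ℝ) => xsel (bhat + bc.1) :=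
          hxselcont.comp (continuous_const.add continuous_fst)
        refine continuous_finset_sum _ fun i _ => ?_
        exact (continuous_const.add ((continuous_apply i).comp continuous_snd)).mul
          ((continuous_apply i).comp hx1)
      obtain ⟨bc0, hbc0U, hmax⟩ := hUcompact.exists_isMaxOn ⟨(0, 0), hU0⟩ hgcont.continuousOn
      refine ⟨g bc0, ?_⟩
      rintro ⟨b, c⟩ ⟨hbcU, -, -⟩
      have hfeas : xsel (bhat + b) ∈ Pfeas m n Ahat bhat b :=
        ⟨(hxsel (bhat + b)).2, (hxsel (bhat + b)).1⟩
      refine le_trans (pval_le_of_mem_aux hfeas) ?_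
      have := hmax hbcU
      exact_mod_cast this
  refine ⟨hne, hfin, ?_⟩
  obtain ⟨M, hMle⟩ := hM
  refine lt_of_le_of_lt (sSup_le ?_) (EReal.coe_lt_top M)
  rintro _ ⟨bc, hbc, rfl⟩
  exact hMle bc hbc
end

section
/- Under Assumption 1, if p^- is finite (i.e., p^- ∈ ℝ), then q^- = p^-. -/
open Matrix

/-!
A point of `U` outside `Ū` has either `P(b) = ∅`, hence `p(b,c) = +∞`, which does not affect the
infimum, or `P(b) ≠ ∅` and `D(c) = ∅`. In the second case Farkas' lemma gives a ray `d ≥ 0`,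
`Âd = 0`, `(ĉ + c)ᵀd < 0` along which the objective decreases without bound, so `p(b,c) = -∞`,
which finiteness of `p⁻` excludes. Farkas' lemma follows by separating `ĉ + c` from the
finitely generated cone `{Âᵀy + s : s ≥ 0}`; such a cone is closed because, by the conic
Carathéodory argument, it is a finite union of cones with linearly independent generators.
-/

theorem exists_nonneg_coeff_eq_zero_sum_smul_eq {ι E : Type*} [AddCommGroup E] [Module ℝ E]
    {s : Finset ι} {v : ι → E} {t g : ι → ℝ}
    (ht : ∀ j ∈ s, 0 ≤ t j) (hg : ∑ j ∈ s, g j • v j = 0) (hneg : ∃ i ∈ s, g i < 0) :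
    ∃ i ∈ s, ∃ t' : ι → ℝ, (∀ j ∈ s, 0 ≤ t' j) ∧ t' i = 0 ∧
      ∑ j ∈ s, t' j • v j = ∑ j ∈ s, t j • v j := by
  classical
  obtain ⟨i, hi, hmin⟩ := (s.filter fun j => g j < 0).exists_min_image (fun j => t j / -g j)
    (by simpa [Finset.Nonempty] using hneg)
  obtain ⟨his, hgi⟩ := Finset.mem_filter.mp hi
  -- the largest step along `g` that keeps all coefficients nonnegative
  set r := t i / -g i
  refine ⟨i, his, t + r • g, fun j hj => ?_, ?_, ?_⟩
  · simp only [Pi.add_apply, Pi.smul_apply, smul_eq_mul]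
    rcases lt_or_ge (g j) 0 with hgj | hgj
    · have := (le_div_iff₀ (neg_pos.mpr hgj)).mp (hmin j (Finset.mem_filter.mpr ⟨hj, hgj⟩))
      linarith
    · exact add_nonneg (ht j hj) (mul_nonneg (div_nonneg (ht i his) (by linarith)) hgj)
  · simp only [Pi.add_apply, Pi.smul_apply, smul_eq_mul, r]
    field_simp [hgi.ne]
    ring
  · simp only [Pi.add_apply, Pi.smul_apply, smul_eq_mul, add_smul, mul_smul,
      Finset.sum_add_distrib, ← Finset.smul_sum, hg, smul_zero, add_zero]

namespace PointedCone

variable {E : Type*}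

section Module

variable [AddCommGroup E] [Module ℝ E]

theorem mem_hull_finset_iff {s : Finset E} {x : E} :
    x ∈ hull ℝ (s : Set E) ↔ ∃ t : E → ℝ, (∀ a ∈ s, 0 ≤ t a) ∧ ∑ a ∈ s, t a • a = x := by
  constructor
  · intro hx
    obtain ⟨t, -, rfl⟩ := Submodule.mem_span_finset.mp hx
    exact ⟨fun a => t a, fun a _ => (t a).2, by simp only [Nonneg.coe_smul]⟩
  · rintro ⟨t, ht, rfl⟩
    exact Submodule.sum_mem _ fun a ha => smul_mem _ (ht a ha) (subset_hull ha)

theorem coe_hull_finset_eq_iUnion_erase [DecidableEq E] {s : Finset E}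
    (hs : ¬ LinearIndepOn ℝ id (s : Set E)) :
    (hull ℝ (s : Set E) : Set E) = ⋃ a ∈ s, (hull ℝ (s.erase a : Set E) : Set E) := by
  refine subset_antisymm (fun x hx => ?_)
    (Set.iUnion₂_subset fun a _ => Submodule.span_mono (by simp))
  obtain ⟨t, ht, rfl⟩ := mem_hull_finset_iff.mp hx
  obtain ⟨g, hg, a, ha, hga⟩ := not_linearIndepOn_finset_iff.mp hs
  simp only [id] at hg
  obtain ⟨g, hg, hneg⟩ : ∃ g : E → ℝ, ∑ b ∈ s, g b • b = 0 ∧ ∃ a ∈ s, g a < 0 := by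
    rcases hga.lt_or_gt with hlt | hgt
    · exact ⟨g, hg, a, ha, hlt⟩
    · refine ⟨-g, ?_, a, ha, by simpa using hgt⟩
      simp only [Pi.neg_apply, neg_smul, Finset.sum_neg_distrib, hg, neg_zero]
  obtain ⟨a, ha, t', ht', hta, hsum⟩ := exists_nonneg_coeff_eq_zero_sum_smul_eq ht hg hneg
  refine Set.mem_biUnion ha (mem_hull_finset_iff.mpr
    ⟨t', fun b hb => ht' b (Finset.mem_of_mem_erase hb), ?_⟩)
  rw [Finset.sum_erase _ (by rw [hta, zero_smul])]
  simpa using hsum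

end Module

section Topology

variable [AddCommGroup E] [Module ℝ E] [TopologicalSpace E] [IsTopologicalAddGroup E]
  [ContinuousSMul ℝ E] [T2Space E]

theorem isClosed_hull_of_linearIndepOn {s : Finset E} (hs : LinearIndepOn ℝ id (s : Set E)) :
    IsClosed (hull ℝ (s : Set E) : Set E) := by
  let L := Fintype.linearCombination ℝ (fun a : s => (a : E))
  have hL : LinearMap.ker L = ⊥ :=
    LinearMap.ker_eq_bot.mpr hs.fintypeLinearCombination_injective
  have hcone : (hull ℝ (s : Set E) : Set E) = L '' Set.Ici 0 := by
    ext x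
    constructor
    · intro hx
      obtain ⟨t, ht, rfl⟩ := mem_hull_finset_iff.mp hx
      exact ⟨fun a => t a, fun a => ht a a.2, by
        rw [Fintype.linearCombination_apply, Finset.sum_coe_sort s fun a => t a • a]⟩
    · rintro ⟨t, ht, rfl⟩
      rw [Fintype.linearCombination_apply]
      exact Submodule.sum_mem _ fun a _ => smul_mem _ (ht a) (subset_hull a.2)
  rw [hcone]
  exact (LinearMap.isClosedEmbedding_of_injective hL).isClosedMap _ isClosed_Ici

theorem isClosed_hull_finset (s : Finset E) : IsClosed (hull ℝ (s : Set E) : Set E) := by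
  classical
  induction s using Finset.strongInduction with
  | H s ih =>
    by_cases hs : LinearIndepOn ℝ id (s : Set E)
    · exact isClosed_hull_of_linearIndepOn hs
    · rw [coe_hull_finset_eq_iUnion_erase hs]
      exact isClosed_biUnion_finset fun a ha => ih _ (Finset.erase_ssubset ha)

theorem _root_.Set.Finite.isClosed_hull {s : Set E} (hs : s.Finite) :
    IsClosed (hull ℝ s : Set E) := by
  obtain ⟨s, rfl⟩ := hs.exists_finset_coe
  exact isClosed_hull_finset s

theorem exists_strongDual_nonneg_neg_of_notMem_hull [LocallyConvexSpace ℝ E] {s : Set E}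
    (hs : s.Finite) {x : E} (hx : x ∉ hull ℝ s) : ∃ f : StrongDual ℝ E, (∀ y ∈ s, 0 ≤ f y) ∧ f x < 0 := by
  let C : ProperCone ℝ E := { toSubmodule := hull ℝ s, isClosed' := hs.isClosed_hull }
  obtain ⟨f, hf, hfx⟩ := C.hyperplane_separation_point hx
  exact ⟨f, fun y hy => hf y (subset_hull hy), hfx⟩

end Topology

end PointedCone

namespace Matrix

variable {m n : Type*} [Fintype m] [Fintype n] [DecidableEq n]

theorem exists_nonneg_mulVec_eq_zero_dotProduct_neg (A : Matrix m n ℝ) (c : n → ℝ)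
    (h : ∀ y, ¬ Aᵀ *ᵥ y ≤ c) : ∃ d, 0 ≤ d ∧ A *ᵥ d = 0 ∧ c ⬝ᵥ d < 0 := by
  -- `{Aᵀ y + s | s ≥ 0}` is the cone generated by the rows `±A i` and the unit vectors.
  let w : m ⊕ m ⊕ n → n → ℝ :=
    Sum.elim (fun i => A i) (Sum.elim (fun i => -A i) fun j => Pi.single j 1)
  have hc : c ∉ PointedCone.hull ℝ (Set.range w) := by
    intro hc
    obtain ⟨t, rfl⟩ := (Submodule.mem_span_range_iff_exists_fun _).mp hc
    refine h (fun i => t (.inl i) - t (.inr (.inl i))) fun j => ?_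
    have htj := (t (.inr (.inr j))).2
    simp only [mulVec, dotProduct, transpose_apply, mul_sub, Finset.sum_sub_distrib,
      ← Nonneg.coe_smul, Finset.sum_apply, Pi.smul_apply, smul_eq_mul, Fintype.sum_sum_type,
      Sum.elim_inl, mul_comm, Sum.elim_inr, Pi.neg_apply, neg_mul, Finset.sum_neg_distrib,
      Pi.single_apply, ite_mul, one_mul, zero_mul, Finset.sum_ite_eq, Finset.mem_univ,
      ↓reduceIte, tsub_le_iff_right, w]
    linarith
  obtain ⟨f, hf, hfc⟩ :=
    PointedCone.exists_strongDual_nonneg_neg_of_notMem_hull (Set.finite_range w) hc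
  have hfd : ∀ x, f x = x ⬝ᵥ fun j => f (Pi.single j 1) := by
    intro x
    conv_lhs => rw [← Finset.univ_sum_single x]
    simp only [map_sum, dotProduct]
    refine Finset.sum_congr rfl fun j _ => ?_
    rw [← smul_eq_mul, ← map_smul, ← Pi.single_smul', smul_eq_mul, mul_one]
  refine ⟨fun j => f (Pi.single j 1), fun j => hf _ ⟨.inr (.inr j), rfl⟩, funext fun i => ?_, ?_⟩
  · have h₁ := hf _ ⟨.inl i, rfl⟩
    have h₂ := hf _ ⟨.inr (.inl i), rfl⟩
    simp only [w, Sum.elim_inl, Sum.elim_inr, map_neg, Left.nonneg_neg_iff] at h₁ h₂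
    rw [mulVec, ← hfd, Pi.zero_apply]
    exact le_antisymm h₂ h₁
  · rwa [← hfd]

end Matrix

section PerturbedLP

variable {m n : ℕ} {Ahat : Matrix (Fin m) (Fin n) ℝ} {bhat b : Fin m → ℝ} {chat c : Fin n → ℝ}

theorem pval_eq_top_of_Pfeas_eq_empty (hP : Pfeas m n Ahat bhat b = ∅) :
    pval m n Ahat bhat b chat c = ⊤ := by
  rw [pval, hP, Set.image_empty, sInf_empty]

theorem pval_eq_bot_of_improving_ray {x d : Fin n → ℝ}
    (hx : x ∈ Pfeas m n Ahat bhat b) (hd : 0 ≤ d) (hAd : Ahat *ᵥ d = 0)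
    (hcd : (chat + c) ⬝ᵥ d < 0) : pval m n Ahat bhat b chat c = ⊥ := by
  rw [pval, EReal.eq_bot_iff_forall_lt]
  intro r
  set δ := (chat + c) ⬝ᵥ d
  set τ := (|(chat + c) ⬝ᵥ x - r| + 1) / -δ
  have hτδ : τ * δ = -(|(chat + c) ⬝ᵥ x - r| + 1) := by
    rw [div_mul_eq_mul_div, div_neg, mul_div_cancel_right₀ _ hcd.ne]
  have hmem : x + τ • d ∈ Pfeas m n Ahat bhat b :=
    ⟨by rw [mulVec_add, mulVec_smul, hAd, smul_zero, add_zero, hx.1],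
      add_nonneg hx.2 (smul_nonneg (div_nonneg (by positivity) (by linarith)) hd)⟩
  have hval : (chat + c) ⬝ᵥ (x + τ • d) < r := by
    rw [dotProduct_add, dotProduct_smul, smul_eq_mul, hτδ]
    linarith [le_abs_self ((chat + c) ⬝ᵥ x - r)]
  exact (sInf_le (Set.mem_image_of_mem _ hmem)).trans_lt (EReal.coe_lt_coe_iff.mpr hval)

theorem pval_eq_bot_of_Dfeas_eq_empty (hP : (Pfeas m n Ahat bhat b).Nonempty)
    (hD : Dfeas m n Ahat chat c = ∅) : pval m n Ahat bhat b chat c = ⊥ := by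
  obtain ⟨x, hx⟩ := hP
  have hinfeas : ∀ y, ¬ Ahatᵀ *ᵥ y ≤ chat + c := fun y hy =>
    (Set.eq_empty_iff_forall_notMem.mp hD) (y, chat + c - Ahatᵀ *ᵥ y)
      ⟨add_sub_cancel _ _, sub_nonneg.mpr hy⟩
  obtain ⟨d, hd, hAd, hcd⟩ := exists_nonneg_mulVec_eq_zero_dotProduct_neg Ahat _ hinfeas
  exact pval_eq_bot_of_improving_ray hx hd hAd hcd

end PerturbedLP

theorem q_minus_eq_p_minus_of_finite_general (m n : ℕ)
    (Ahat : Matrix (Fin m) (Fin n) ℝ) (bhat : Fin m → ℝ) (chat : Fin n → ℝ)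
    (U : Set ((Fin m → ℝ) × (Fin n → ℝ)))
    (hfin : ∃ v : ℝ,
      sInf ((fun bc => pval m n Ahat bhat bc.1 chat bc.2) '' U) = (v : EReal)) :
    sInf ((fun bc => pval m n Ahat bhat bc.1 chat bc.2) ''
        Ubar m n Ahat bhat chat U) =
      sInf ((fun bc => pval m n Ahat bhat bc.1 chat bc.2) '' U) := by
  obtain ⟨v, hv⟩ := hfin
  refine le_antisymm (le_sInf ?_) (sInf_le_sInf (Set.image_mono fun bc hbc => hbc.1))
  rintro _ ⟨bc, hbc, rfl⟩
  rcases (Pfeas m n Ahat bhat bc.1).eq_empty_or_nonempty with hP | hP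
  · exact le_top.trans_eq (pval_eq_top_of_Pfeas_eq_empty hP).symm
  rcases (Dfeas m n Ahat chat bc.2).eq_empty_or_nonempty with hD | hD
  · have hle : (v : EReal) ≤ pval m n Ahat bhat bc.1 chat bc.2 := hv ▸ sInf_le ⟨bc, hbc, rfl⟩
    rw [pval_eq_bot_of_Dfeas_eq_empty hP hD, le_bot_iff] at hle
    exact absurd hle (EReal.coe_ne_bot v)
  exact sInf_le ⟨bc, ⟨hbc, hP, hD⟩, rfl⟩

/-- Under Assumption 1 (`U` compact, convex, containing `(0,0)`),
if `p⁻ = inf{p(b,c) : (b,c) ∈ U}` is a finite real number, then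
`q⁻ = inf{p(b,c) : (b,c) ∈ Ū}` equals `p⁻`. -/
theorem q_minus_eq_p_minus_of_finite (m n : ℕ)
    (Ahat : Matrix (Fin m) (Fin n) ℝ) (bhat : Fin m → ℝ) (chat : Fin n → ℝ)
    (U : Set ((Fin m → ℝ) × (Fin n → ℝ)))
    (hUcompact : IsCompact U) (hUconvex : Convex ℝ U) (hU0 : (0, 0) ∈ U)
    (hfin : ∃ v : ℝ,
      sInf ((fun bc => pval m n Ahat bhat bc.1 chat bc.2) '' U) = (v : EReal)) :
    sInf ((fun bc => pval m n Ahat bhat bc.1 chat bc.2) ''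
        Ubar m n Ahat bhat chat U) =
      sInf ((fun bc => pval m n Ahat bhat bc.1 chat bc.2) '' U) :=
  q_minus_eq_p_minus_of_finite_general m n Ahat bhat chat U hfin
end

section
/- Let N = 1 + 2m + 3n and write z ∈ ℝ^N in blocks z = (t, b, c, x, y, s) with t ∈ ℝ, b, y ∈ ℝ^m, and c, x, s ∈ ℝ^n. Let K = homg(U) × ℝ^n_+ × ℝ^m × ℝ^n_+ ⊆ ℝ^N, and let E ∈ ℝ^{(m+n+1)×N} and f ∈ ℝ^{m+n+1} encode the linear equations Âx = t·b̂ + b, Â^T y + s = t·ĉ + c, and t = 1 (so f is zero except for a single entry 1 corresponding to the equation t = 1). Then, under Assumptions 1 and 2, q^- = inf{(ĉ+c)^T x : Âx = b̂+b, x ≥ 0, Â^T y + s = ĉ+c, s ≥ 0, (b,c) ∈ U} equals the optimal value of the completely positive program: minimize over (z, Z) ∈ ℝ^N × S^N the quantity (∑_{j=1}^n Z_{c_j, x_j}) + ĉ^T x, subject to Ez = f, diag(E Z E^T) = f ∘ f, and the bordered matrix [[1, z^T],[z, Z]] ∈ CP(ℝ_+ × K). -/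
open Matrix

/-- Index type for the variable `z = (t, b, c, x, y, s) ∈ ℝ^N`, `N = 1+2m+3n`. -/
abbrev RSAIdx (m n : ℕ) := Unit ⊕ (Fin m ⊕ (Fin n ⊕ (Fin n ⊕ (Fin m ⊕ Fin n))))

/-- Index type for the `m + n + 1` linear equations. -/
abbrev RSARow (m n : ℕ) := (Fin m ⊕ Fin n) ⊕ Unit

/-- The matrix `E` encoding the equations `Âx = t·b̂ + b`, `Âᵀy + s = t·ĉ + c`
and `t = 1` (each written with right-hand side `0`, `0`, `1` respectively). -/
def Emat (m n : ℕ) (Ahat : Matrix (Fin m) (Fin n) ℝ) (bhat : Fin m → ℝ)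
    (chat : Fin n → ℝ) : Matrix (RSARow m n) (RSAIdx m n) ℝ :=
  Matrix.of fun row col =>
    match row, col with
    | Sum.inl (Sum.inl i), Sum.inl _ => -bhat i
    | Sum.inl (Sum.inl i), Sum.inr (Sum.inl i') => if i = i' then -1 else 0
    | Sum.inl (Sum.inl _), Sum.inr (Sum.inr (Sum.inl _)) => 0
    | Sum.inl (Sum.inl i), Sum.inr (Sum.inr (Sum.inr (Sum.inl j))) => Ahat i j
    | Sum.inl (Sum.inl _), Sum.inr (Sum.inr (Sum.inr (Sum.inr _))) => 0
    | Sum.inl (Sum.inr j), Sum.inl _ => -chat j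
    | Sum.inl (Sum.inr _), Sum.inr (Sum.inl _) => 0
    | Sum.inl (Sum.inr j), Sum.inr (Sum.inr (Sum.inl j')) => if j = j' then -1 else 0
    | Sum.inl (Sum.inr _), Sum.inr (Sum.inr (Sum.inr (Sum.inl _))) => 0
    | Sum.inl (Sum.inr j), Sum.inr (Sum.inr (Sum.inr (Sum.inr (Sum.inl i)))) => Ahat i j
    | Sum.inl (Sum.inr j), Sum.inr (Sum.inr (Sum.inr (Sum.inr (Sum.inr j')))) =>
        if j = j' then 1 else 0
    | Sum.inr _, Sum.inl _ => 1
    | Sum.inr _, Sum.inr _ => 0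

/-- The right-hand-side vector `f`: all zeros except a `1` for `t = 1`. -/
def fvec (m n : ℕ) : RSARow m n → ℝ :=
  Sum.elim (Sum.elim (fun _ => 0) (fun _ => 0)) (fun _ => 1)

/-- The homogenization of a set `V`:
`homg(V) = {(t,v) : t > 0, v/t ∈ V} ∪ {(0,0)}`. -/
def homg {α : Type*} [AddCommMonoid α] [Module ℝ α] (V : Set α) : Set (ℝ × α) :=
  {p | 0 < p.1 ∧ p.1⁻¹ • p.2 ∈ V} ∪ {(0, 0)}

/-- The cone `K = homg(U) × ℝⁿ₊ × ℝᵐ × ℝⁿ₊` (blocks `(t,b,c)`, `x`, `y`, `s`). -/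
def Kset (m n : ℕ) (U : Set ((Fin m → ℝ) × (Fin n → ℝ))) : Set (RSAIdx m n → ℝ) :=
  {z | (z (Sum.inl ()), ((fun i => z (Sum.inr (Sum.inl i))),
        (fun j => z (Sum.inr (Sum.inr (Sum.inl j)))))) ∈ homg U ∧
    (∀ j, 0 ≤ z (Sum.inr (Sum.inr (Sum.inr (Sum.inl j))))) ∧
    (∀ j, 0 ≤ z (Sum.inr (Sum.inr (Sum.inr (Sum.inr (Sum.inr j))))))}

/-- The completely positive cone over a set `C` of vectors: all finite sums
`∑ₖ xᵏ(xᵏ)ᵀ` with each `xᵏ ∈ C`. -/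
def CPcone {ι : Type*} [Fintype ι] (C : Set (ι → ℝ)) : Set (Matrix ι ι ℝ) :=
  {X | ∃ (k : ℕ) (v : Fin k → ι → ℝ), (∀ j, v j ∈ C) ∧
    X = ∑ j, Matrix.vecMulVec (v j) (v j)}

/-- The bordered matrix `[[1, zᵀ], [z, Z]]`. -/
def borderedMatrix {ι : Type*} (z : ι → ℝ) (Z : Matrix ι ι ℝ) :
    Matrix (Unit ⊕ ι) (Unit ⊕ ι) ℝ :=
  Matrix.fromBlocks (Matrix.of fun _ _ => (1 : ℝ)) (Matrix.of fun _ j => z j)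
    (Matrix.of fun i _ => z i) Z

/-- The cone `ℝ₊ × K` as a set of bordered vectors. -/
def borderedCone (m n : ℕ) (U : Set ((Fin m → ℝ) × (Fin n → ℝ))) :
    Set (Unit ⊕ RSAIdx m n → ℝ) :=
  {w | 0 ≤ w (Sum.inl ()) ∧ (fun i => w (Sum.inr i)) ∈ Kset m n U}


section RSAAux

variable {m n : ℕ}

lemma rsa_mulVec_lin {ι κ : Type*} [Fintype ι] [Fintype κ] (M : Matrix κ ι ℝ) {k : ℕ}
    (lam : Fin k → ℝ) (u : Fin k → ι → ℝ) (r : κ) :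
    M.mulVec (fun c => ∑ j, lam j * u j c) r = ∑ j, lam j * M.mulVec (u j) r := by
  simp only [Matrix.mulVec, dotProduct, Finset.mul_sum]
  rw [Finset.sum_comm]
  exact Finset.sum_congr rfl fun j _ => Finset.sum_congr rfl fun c _ => by ring

lemma rsa_diag_sq {ι κ : Type*} [Fintype ι] [Fintype κ] (M : Matrix κ ι ℝ) {k : ℕ}
    (u : Fin k → ι → ℝ) (r : κ) :
    (M * (∑ j, Matrix.vecMulVec (u j) (u j)) * M.transpose) r r
      = ∑ j, (M.mulVec (u j) r) * (M.mulVec (u j) r) := by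
  simp only [Matrix.mul_apply, Matrix.sum_apply, Matrix.vecMulVec_apply,
    Matrix.transpose_apply, Matrix.mulVec, dotProduct, Finset.sum_mul,
    Finset.mul_sum]
  rw [show (∑ x : ι, ∑ x_1 : ι, ∑ i : Fin k, M r x_1 * (u i x_1 * u i x) * M r x)
      = ∑ x : ι, ∑ i : Fin k, ∑ x_1 : ι, M r x_1 * (u i x_1 * u i x) * M r x from
    Finset.sum_congr rfl fun x _ => Finset.sum_comm, Finset.sum_comm]
  refine Finset.sum_congr rfl fun j _ => ?_
  rw [Finset.sum_comm]
  exact Finset.sum_congr rfl fun a _ => Finset.sum_congr rfl fun b _ => by ring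

lemma rsa_sq_sum_key {k : ℕ} (lam a : Fin k → ℝ) (f : ℝ)
    (h1 : ∑ j, lam j * lam j = 1) (h2 : ∑ j, lam j * a j = f)
    (h3 : ∑ j, a j * a j = f * f) : ∀ j, a j = f * lam j := by
  have hz : ∑ j, (a j - f * lam j) ^ 2 = 0 := by
    have he : ∀ j : Fin k, (a j - f * lam j) ^ 2
        = a j * a j - 2 * f * (lam j * a j) + f * f * (lam j * lam j) := fun j => by ring
    rw [Finset.sum_congr rfl fun j _ => he j]
    rw [Finset.sum_add_distrib, Finset.sum_sub_distrib, ← Finset.mul_sum, ← Finset.mul_sum,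
      h1, h2, h3]
    ring
  intro j
  have h0 := (Finset.sum_eq_zero_iff_of_nonneg (fun i _ => sq_nonneg _)).mp hz j
    (Finset.mem_univ j)
  have := pow_eq_zero_iff (n := 2) (by norm_num) |>.mp h0
  linarith [sub_eq_zero.mp this]

variable (A : Matrix (Fin m) (Fin n) ℝ) (bh : Fin m → ℝ) (ch : Fin n → ℝ)

lemma Emat_row1 (z : RSAIdx m n → ℝ) (i : Fin m) :
    (Emat m n A bh ch).mulVec z (Sum.inl (Sum.inl i)) =
      -bh i * z (Sum.inl ()) - z (Sum.inr (Sum.inl i))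
        + ∑ j, A i j * z (Sum.inr (Sum.inr (Sum.inr (Sum.inl j)))) := by
  simp [Matrix.mulVec, dotProduct, Emat, Fintype.sum_sum_type, ite_mul,
    Finset.sum_ite_eq, neg_mul]
  ring

lemma Emat_row2 (z : RSAIdx m n → ℝ) (j : Fin n) :
    (Emat m n A bh ch).mulVec z (Sum.inl (Sum.inr j)) =
      -ch j * z (Sum.inl ()) - z (Sum.inr (Sum.inr (Sum.inl j)))
        + ∑ i, A i j * z (Sum.inr (Sum.inr (Sum.inr (Sum.inr (Sum.inl i)))))
        + z (Sum.inr (Sum.inr (Sum.inr (Sum.inr (Sum.inr j))))) := by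
  simp [Matrix.mulVec, dotProduct, Emat, Fintype.sum_sum_type, ite_mul,
    Finset.sum_ite_eq, neg_mul]
  ring

lemma Emat_row3 (z : RSAIdx m n → ℝ) :
    (Emat m n A bh ch).mulVec z (Sum.inr ()) = z (Sum.inl ()) := by
  simp [Matrix.mulVec, dotProduct, Emat, Fintype.sum_sum_type]

end RSAAux

/-- Under Assumptions 1 and 2, the best-case restricted value
`q⁻ = inf{(ĉ+c)ᵀx : Âx = b̂+b, x ≥ 0, Âᵀy + s = ĉ+c, s ≥ 0, (b,c) ∈ U}` equals
the optimal value of the completely positive program: minimize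
`(∑ⱼ Z_{cⱼ,xⱼ}) + ĉᵀx` subject to `Ez = f`, `diag(EZEᵀ) = f ∘ f`, and
`[[1, zᵀ],[z, Z]] ∈ CP(ℝ₊ × K)` with `K = homg(U) × ℝⁿ₊ × ℝᵐ × ℝⁿ₊`. -/
theorem q_minus_copositive_formulation (m n : ℕ)
    (Ahat : Matrix (Fin m) (Fin n) ℝ) (bhat : Fin m → ℝ) (chat : Fin n → ℝ)
    (U : Set ((Fin m → ℝ) × (Fin n → ℝ)))
    (hUcompact : IsCompact U) (hUconvex : Convex ℝ U) (hU0 : (0, 0) ∈ U)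
    (hP0 : ∃ x : Fin n → ℝ, Ahat.mulVec x = bhat ∧ 0 ≤ x)
    (hD0 : ∃ (y : Fin m → ℝ) (s : Fin n → ℝ), Ahat.transpose.mulVec y + s = chat ∧ 0 ≤ s)
    (hbdd : Bornology.IsBounded {x : Fin n → ℝ | Ahat.mulVec x = bhat ∧ 0 ≤ x} ∨
      Bornology.IsBounded {ys : (Fin m → ℝ) × (Fin n → ℝ) |
        Ahat.transpose.mulVec ys.1 + ys.2 = chat ∧ 0 ≤ ys.2}) :
    sInf {e : EReal | ∃ b c x y s, (b, c) ∈ U ∧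
        Ahat.mulVec x = bhat + b ∧ 0 ≤ x ∧
        Ahat.transpose.mulVec y + s = chat + c ∧ 0 ≤ s ∧
        e = (((chat + c) ⬝ᵥ x : ℝ) : EReal)} =
      sInf {e : EReal | ∃ (z : RSAIdx m n → ℝ) (Z : Matrix (RSAIdx m n) (RSAIdx m n) ℝ),
        (Emat m n Ahat bhat chat).mulVec z = fvec m n ∧
        (∀ r, (Emat m n Ahat bhat chat * Z * (Emat m n Ahat bhat chat).transpose) r r =
          fvec m n r * fvec m n r) ∧
        borderedMatrix z Z ∈ CPcone (borderedCone m n U) ∧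
        e = (((∑ j, Z (Sum.inr (Sum.inr (Sum.inl j)))
                      (Sum.inr (Sum.inr (Sum.inr (Sum.inl j)))))
              + ∑ j, chat j * z (Sum.inr (Sum.inr (Sum.inr (Sum.inl j)))) : ℝ) : EReal)} := by
  apply le_antisymm
  · -- hard direction: sInf LHS ≤ sInf RHS
    refine le_sInf ?_
    rintro e ⟨z, Z, hEz, hdiag, ⟨k, w, hwmem, hwsum⟩, hev⟩
    set lam : Fin k → ℝ := fun j => w j (Sum.inl ()) with hlamdef
    set u : Fin k → RSAIdx m n → ℝ := fun j i => w j (Sum.inr i) with hudef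
    have happ : ∀ a b, borderedMatrix z Z a b = ∑ j, w j a * w j b := by
      intro a b
      rw [hwsum]; simp [Matrix.sum_apply, Matrix.vecMulVec_apply]
    have h1 : ∑ j, lam j * lam j = 1 := by
      have h := happ (Sum.inl ()) (Sum.inl ())
      simp [borderedMatrix] at h
      rw [hlamdef]; exact h.symm
    have hz : ∀ i, z i = ∑ j, lam j * u j i := by
      intro i
      have h := happ (Sum.inl ()) (Sum.inr i)
      simp [borderedMatrix] at h
      rw [hlamdef, hudef]; exact h
    have hZ : Z = ∑ j, Matrix.vecMulVec (u j) (u j) := by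
      ext i i'
      have h := happ (Sum.inr i) (Sum.inr i')
      simp [borderedMatrix] at h
      simpa [Matrix.sum_apply, Matrix.vecMulVec_apply, hudef] using h
    have hkey : ∀ r j, (Emat m n Ahat bhat chat).mulVec (u j) r = fvec m n r * lam j := by
      intro r
      refine rsa_sq_sum_key lam (fun j => (Emat m n Ahat bhat chat).mulVec (u j) r) _ h1 ?_ ?_
      · rw [← rsa_mulVec_lin]
        have hzz : (fun i => ∑ j, lam j * u j i) = z := by funext i; exact (hz i).symm
        rw [hzz, hEz]
      · rw [← rsa_diag_sq, ← hZ]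
        exact hdiag r
    have hlam0 : ∀ j, 0 ≤ lam j := fun j => (hwmem j).1
    have htj : ∀ j, u j (Sum.inl ()) = lam j := by
      intro j
      have h := hkey (Sum.inr ()) j
      rw [Emat_row3] at h
      simpa [fvec] using h
    set bb : Fin k → Fin m → ℝ := fun j i => u j (Sum.inr (Sum.inl i)) with hbbdef
    set cc : Fin k → Fin n → ℝ := fun j j' => u j (Sum.inr (Sum.inr (Sum.inl j'))) with hccdef
    set xx : Fin k → Fin n → ℝ :=
      fun j j' => u j (Sum.inr (Sum.inr (Sum.inr (Sum.inl j')))) with hxxdef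
    set yy : Fin k → Fin m → ℝ :=
      fun j i => u j (Sum.inr (Sum.inr (Sum.inr (Sum.inr (Sum.inl i))))) with hyydef
    set ss : Fin k → Fin n → ℝ :=
      fun j j' => u j (Sum.inr (Sum.inr (Sum.inr (Sum.inr (Sum.inr j'))))) with hssdef
    set vval : Fin k → ℝ :=
      fun j => (chat + (lam j)⁻¹ • cc j) ⬝ᵥ ((lam j)⁻¹ • xx j) with hvvaldef
    have hKmem : ∀ j, (fun i => w j (Sum.inr i)) ∈ Kset m n U := fun j => (hwmem j).2
    have czero : ∀ j, lam j = 0 → cc j = 0 := by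
      intro j hj
      rcases (hKmem j).1 with ⟨hp, _⟩ | hzero
      · exfalso
        have hp' : (0:ℝ) < lam j := by rw [← htj j]; exact hp
        rw [hj] at hp'
        exact lt_irrefl _ hp'
      · simp only [Set.mem_singleton_iff, Prod.mk.injEq, Prod.mk_eq_zero] at hzero
        exact hzero.2.2
    have hfeas : ∀ j, lam j ≠ 0 → (((vval j : ℝ) : EReal) ∈
        {e : EReal | ∃ b c x y s, (b, c) ∈ U ∧
          Ahat.mulVec x = bhat + b ∧ 0 ≤ x ∧
          Ahat.transpose.mulVec y + s = chat + c ∧ 0 ≤ s ∧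
          e = (((chat + c) ⬝ᵥ x : ℝ) : EReal)}) := by
      intro j hj
      have hpos : 0 < lam j := lt_of_le_of_ne (hlam0 j) (Ne.symm hj)
      refine ⟨(lam j)⁻¹ • bb j, (lam j)⁻¹ • cc j, (lam j)⁻¹ • xx j,
        (lam j)⁻¹ • yy j, (lam j)⁻¹ • ss j, ?_, ?_, ?_, ?_, ?_, rfl⟩
      · rcases (hKmem j).1 with ⟨_, hU⟩ | hzero
        · have ht : (fun i => w j (Sum.inr i)) (Sum.inl ()) = lam j := htj j
          rw [ht] at hU
          simpa [Prod.smul_mk, hbbdef, hccdef, hudef] using hU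
        · exfalso
          simp only [Set.mem_singleton_iff, Prod.mk.injEq, Prod.mk_eq_zero] at hzero
          exact hj (by rw [← htj j]; exact hzero.1)
      · funext i
        have h := hkey (Sum.inl (Sum.inl i)) j
        rw [Emat_row1, htj j] at h
        simp only [fvec, Sum.elim_inl, Sum.elim_inr, zero_mul] at h
        have hsum : ∑ j', Ahat i j' * xx j j' = bhat i * lam j + bb j i := by
          rw [hbbdef, hxxdef, hudef]; linarith [h]
        simp only [Matrix.mulVec, dotProduct, Pi.smul_apply, smul_eq_mul,
          Pi.add_apply]
        rw [show ∑ j', Ahat i j' * ((lam j)⁻¹ * xx j j')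
            = (lam j)⁻¹ * ∑ j', Ahat i j' * xx j j' by
          rw [Finset.mul_sum]; exact Finset.sum_congr rfl fun _ _ => by ring]
        rw [hsum]
        field_simp
      · intro j'
        have := (hKmem j).2.1 j'
        have : 0 ≤ xx j j' := this
        have h0 : (0:ℝ) ≤ (lam j)⁻¹ := inv_nonneg.mpr (hlam0 j)
        simpa [Pi.smul_apply, smul_eq_mul] using mul_nonneg h0 this
      · funext j'
        have h := hkey (Sum.inl (Sum.inr j')) j
        rw [Emat_row2, htj j] at h
        simp only [fvec, Sum.elim_inl, Sum.elim_inr, zero_mul] at h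
        have hsum : ∑ i, Ahat i j' * yy j i + ss j j' = chat j' * lam j + cc j j' := by
          rw [hyydef, hssdef, hccdef, hudef]; linarith [h]
        simp only [Matrix.mulVec, dotProduct, Pi.smul_apply, smul_eq_mul,
          Pi.add_apply, Matrix.transpose_apply]
        rw [show ∑ i, Ahat i j' * ((lam j)⁻¹ * yy j i)
            = (lam j)⁻¹ * ∑ i, Ahat i j' * yy j i by
          rw [Finset.mul_sum]; exact Finset.sum_congr rfl fun _ _ => by ring]
        have : (lam j)⁻¹ * ∑ i, Ahat i j' * yy j i + (lam j)⁻¹ * ss j j'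
            = (lam j)⁻¹ * (∑ i, Ahat i j' * yy j i + ss j j') := by ring
        rw [this, hsum]
        field_simp
      · intro j'
        have h' : 0 ≤ ss j j' := (hKmem j).2.2 j'
        have h0 : (0:ℝ) ≤ (lam j)⁻¹ := inv_nonneg.mpr (hlam0 j)
        simpa [Pi.smul_apply, smul_eq_mul] using mul_nonneg h0 h'
    set eR : ℝ := (∑ j, Z (Sum.inr (Sum.inr (Sum.inl j)))
          (Sum.inr (Sum.inr (Sum.inr (Sum.inl j)))))
        + ∑ j, chat j * z (Sum.inr (Sum.inr (Sum.inr (Sum.inl j)))) with heRdef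
    have hTsum : eR = ∑ j, ((∑ j', cc j j' * xx j j')
        + lam j * ∑ j', chat j' * xx j j') := by
      rw [heRdef, hZ]
      have e1 : ∑ j', (∑ j, Matrix.vecMulVec (u j) (u j)) (Sum.inr (Sum.inr (Sum.inl j')))
          (Sum.inr (Sum.inr (Sum.inr (Sum.inl j')))) = ∑ j, ∑ j', cc j j' * xx j j' := by
        simp only [Matrix.sum_apply, Matrix.vecMulVec_apply]
        rw [Finset.sum_comm]
      have e2 : ∑ j', chat j' * z (Sum.inr (Sum.inr (Sum.inr (Sum.inl j'))))
          = ∑ j, lam j * ∑ j', chat j' * xx j j' := by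
        rw [Finset.sum_congr rfl fun j' _ => by
          rw [hz (Sum.inr (Sum.inr (Sum.inr (Sum.inl j')))), Finset.mul_sum]]
        rw [Finset.sum_comm]
        refine Finset.sum_congr rfl fun j _ => ?_
        rw [Finset.mul_sum]
        exact Finset.sum_congr rfl fun j' _ => by ring
      rw [e1, e2, ← Finset.sum_add_distrib]
    have hT : ∀ j, (∑ j', cc j j' * xx j j') + lam j * ∑ j', chat j' * xx j j'
        = lam j * lam j * vval j := by
      intro j
      by_cases hj : lam j = 0
      · simp [hj, czero j hj]
      · rw [hvvaldef]
        simp only [dotProduct, Pi.add_apply, Pi.smul_apply, smul_eq_mul]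
        rw [Finset.mul_sum, Finset.mul_sum, ← Finset.sum_add_distrib]
        refine Finset.sum_congr rfl fun j' _ => ?_
        field_simp
        ring
    have hex : ∃ j, lam j ≠ 0 ∧ vval j ≤ eR := by
      by_contra hcon
      push_neg at hcon
      have hj0 : ∃ j, lam j ≠ 0 := by
        by_contra hall
        push_neg at hall
        rw [Finset.sum_congr rfl fun j _ => by rw [hall j, mul_zero]] at h1
        simpa using h1
      obtain ⟨j0, hj0⟩ := hj0
      have hlt : ∑ j, lam j * lam j * eR < ∑ j, lam j * lam j * vval j := by
        refine Finset.sum_lt_sum (fun j _ => ?_) ⟨j0, Finset.mem_univ j0, ?_⟩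
        · by_cases hj : lam j = 0
          · simp [hj]
          · have hle := le_of_lt (hcon j hj)
            have hpos : 0 < lam j * lam j :=
              mul_pos (lt_of_le_of_ne (hlam0 j) (Ne.symm hj))
                (lt_of_le_of_ne (hlam0 j) (Ne.symm hj))
            nlinarith
        · have hl := hcon j0 hj0
          have hpos : 0 < lam j0 * lam j0 :=
            mul_pos (lt_of_le_of_ne (hlam0 j0) (Ne.symm hj0))
              (lt_of_le_of_ne (hlam0 j0) (Ne.symm hj0))
          exact (mul_lt_mul_iff_right₀ hpos).mpr hl
      have hsum1 : ∑ j, lam j * lam j * eR = eR := by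
        rw [← Finset.sum_mul, h1, one_mul]
      have hsum2 : ∑ j, lam j * lam j * vval j = eR := by
        rw [hTsum]
        exact (Finset.sum_congr rfl fun j _ => hT j).symm
      rw [hsum1, hsum2] at hlt
      exact lt_irrefl _ hlt
    obtain ⟨j0, hj0ne, hj0le⟩ := hex
    refine le_trans (sInf_le (hfeas j0 hj0ne)) ?_
    rw [hev]
    exact_mod_cast hj0le
  · -- easy direction: every primal feasible point gives a CP feasible point
    apply sInf_le_sInf
    rintro e ⟨b, c, x, y, s, hbc, hP, hx, hD, hs, hev⟩
    set z : RSAIdx m n → ℝ :=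
      Sum.elim (fun _ => 1) (Sum.elim b (Sum.elim c (Sum.elim x (Sum.elim y s)))) with hzdef
    have hEz : (Emat m n Ahat bhat chat).mulVec z = fvec m n := by
      funext r
      rcases r with (i | j) | u
      · rw [Emat_row1]
        have h := congrFun hP i
        simp only [Matrix.mulVec, dotProduct, Pi.add_apply] at h
        simp only [hzdef, Sum.elim_inl, Sum.elim_inr, fvec]
        rw [h]; ring
      · rw [Emat_row2]
        have h := congrFun hD j
        simp only [Matrix.mulVec, dotProduct, Pi.add_apply,
          Matrix.transpose_apply] at h
        simp only [hzdef, Sum.elim_inl, Sum.elim_inr, fvec]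
        linarith [h]
      · rw [Emat_row3]
        simp [hzdef, fvec]
    refine ⟨z, Matrix.vecMulVec z z, hEz, ?_, ?_, ?_⟩
    · intro r
      have hone : Matrix.vecMulVec z z = ∑ _j : Fin 1, Matrix.vecMulVec z z := by simp
      rw [hone, rsa_diag_sq]
      simp [congrFun hEz r]
    · refine ⟨1, fun _ => Sum.elim (fun _ => 1) z, fun j => ⟨zero_le_one, ?_, ?_, ?_⟩, ?_⟩
      · left
        refine ⟨one_pos, ?_⟩
        simpa [hzdef] using hbc
      · intro j'; simpa [hzdef] using hx j'
      · intro j'; simpa [hzdef] using hs j'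
      · funext a b'
        rcases a with _ | i <;> rcases b' with _ | i' <;>
          simp [borderedMatrix, Matrix.vecMulVec_apply, Matrix.fromBlocks]
    · rw [hev]
      norm_cast
      simp only [Matrix.vecMulVec_apply, hzdef, Sum.elim_inl, Sum.elim_inr,
        dotProduct, Pi.add_apply]
      rw [← Finset.sum_add_distrib]
      exact Finset.sum_congr rfl fun j _ => by ring
end

section
/- Let N = 1 + 2m + 3n and write z ∈ ℝ^N in blocks z = (t, b, c, x, y, s) with t ∈ ℝ, b, y ∈ ℝ^m, and c, x, s ∈ ℝ^n. Let K = homg(U) × ℝ^n_+ × ℝ^m × ℝ^n_+ ⊆ ℝ^N, and let E ∈ ℝ^{(m+n+1)×N} and f ∈ ℝ^{m+n+1} encode the linear equations Âx = t·b̂ + b, Â^T y + s = t·ĉ + c, and t = 1 (so f is zero except for a single entry 1 corresponding to the equation t = 1). Then, under Assumptions 1 and 2, q^+ = sup{(b̂+b)^T y : Âx = b̂+b, x ≥ 0, Â^T y + s = ĉ+c, s ≥ 0, (b,c) ∈ U} equals the optimal value of the completely positive program: maximize over (z, Z) ∈ ℝ^N × S^N the quantity (∑_{i=1}^m Z_{b_i,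 y_i}) + b̂^T y, subject to Ez = f, diag(E Z E^T) = f ∘ f, and the bordered matrix [[1, z^T],[z, Z]] ∈ CP(ℝ_+ × K). -/
open Matrix

/-!
A feasible `(b, c, x, y, s)` gives the rank-one certificate `z = (1, b, c, x, y, s)`, `Z = z zᵀ`,
so `q⁺` is at most the value of the CP program. Conversely, write `[[1, zᵀ], [z, Z]] = ∑ⱼ wⱼ wⱼᵀ`
with `wⱼ = (δⱼ, uⱼ)`. The diagonal constraints say `∑ⱼ ((E uⱼ)ᵣ)² = fᵣ²`, so every `uⱼ` solves the
homogeneous equations and `∑ⱼ tⱼ² = 1`; with `∑ⱼ δⱼ tⱼ = z_t = 1 = ∑ⱼ δⱼ²` this forces `δ = t`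
(equality in Cauchy–Schwarz). The objective then becomes `∑ⱼ tⱼ² vⱼ`, where `vⱼ` is the primal
value of `uⱼ / tⱼ` (terms with `tⱼ = 0` vanish since membership in `homg U` forces `b = 0`), a
convex combination of primal values.
-/

section General

variable {ι κ : Type*}

lemma eq_of_sum_mul_self_eq_one [Fintype ι] {a b : ι → ℝ} (ha : ∑ i, a i * a i = 1)
    (hab : ∑ i, a i * b i = 1) (hb : ∑ i, b i * b i = 1) : a = b := by
  have hsq : ∑ i, (a i - b i) * (a i - b i) = 0 := by
    calc ∑ i, (a i - b i) * (a i - b i)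
        = ∑ i, a i * a i - 2 * ∑ i, a i * b i + ∑ i, b i * b i := by
          rw [Finset.mul_sum, ← Finset.sum_sub_distrib, ← Finset.sum_add_distrib]
          exact Finset.sum_congr rfl fun i _ => by ring
      _ = 0 := by rw [ha, hab, hb]; ring
  funext i
  exact sub_eq_zero.mp ((Finset.sum_mul_self_eq_zero_iff _ _).mp hsq i (Finset.mem_univ i))

lemma exists_pos_weight_sum_mul_le [Fintype ι] {w a : ι → ℝ} (hw : ∀ i, 0 ≤ w i)
    (hw1 : ∑ i, w i = 1) : ∃ j, 0 < w j ∧ ∑ i, w i * a i ≤ a j := by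
  have hpos : (Finset.univ.filter fun i => 0 < w i).Nonempty := by
    rw [Finset.filter_nonempty_iff]
    by_contra! h
    have hzero : ∀ i, w i = 0 := fun i => le_antisymm (h i (Finset.mem_univ i)) (hw i)
    simp [hzero] at hw1
  obtain ⟨j, hj, hmax⟩ := Finset.exists_max_image _ a hpos
  refine ⟨j, (Finset.mem_filter.mp hj).2, ?_⟩
  calc ∑ i, w i * a i ≤ ∑ i, w i * a j := by
        refine Finset.sum_le_sum fun i _ => ?_
        rcases (hw i).lt_or_eq with hi | hi
        · exact mul_le_mul_of_nonneg_left (hmax i (by simpa using hi)) (hw i)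
        · simp [← hi]
    _ = a j := by rw [← Finset.sum_mul, hw1, one_mul]

lemma mul_sum_vecMulVec_mul_transpose_apply_self [Fintype ι] [Fintype κ] {k : ℕ}
    (E : Matrix κ ι ℝ) (u : Fin k → ι → ℝ) (r : κ) :
    (E * (∑ j, vecMulVec (u j) (u j)) * Eᵀ) r r = ∑ j, (E *ᵥ u j) r * (E *ᵥ u j) r := by
  simp only [Matrix.mul_sum, Matrix.sum_mul, Matrix.sum_apply, mul_vecMulVec, vecMulVec_mul,
    vecMul_transpose, vecMulVec_apply]

lemma components_of_borderedMatrix_eq_sum {k : ℕ} {z : ι → ℝ} {Z : Matrix ι ι ℝ}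
    {v : Fin k → Unit ⊕ ι → ℝ} (h : borderedMatrix z Z = ∑ j, vecMulVec (v j) (v j)) :
    ∑ j, v j (Sum.inl ()) * v j (Sum.inl ()) = 1 ∧
      z = ∑ j, v j (Sum.inl ()) • (fun i => v j (Sum.inr i)) ∧
      Z = ∑ j, vecMulVec (fun i => v j (Sum.inr i)) (fun i => v j (Sum.inr i)) := by
  have entry : ∀ p q, borderedMatrix z Z p q = ∑ j, v j p * v j q := fun p q => by
    simp [h, Matrix.sum_apply, vecMulVec_apply]
  refine ⟨?_, ?_, ?_⟩
  · simpa [borderedMatrix] using (entry (Sum.inl ()) (Sum.inl ())).symm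
  · funext i
    simpa [borderedMatrix, Finset.sum_apply] using entry (Sum.inl ()) (Sum.inr i)
  · ext i i'
    simpa [borderedMatrix, Matrix.sum_apply, vecMulVec_apply] using entry (Sum.inr i) (Sum.inr i')

lemma dotProduct_add_mul_dotProduct_eq [Fintype ι] {t : ℝ} {b y bhat : ι → ℝ}
    (h : t = 0 → b = 0) : b ⬝ᵥ y + t * (bhat ⬝ᵥ y) = t ^ 2 * ((bhat + t⁻¹ • b) ⬝ᵥ (t⁻¹ • y)) := by
  rcases eq_or_ne t 0 with rfl | ht
  · simp [h rfl]
  · simp only [add_dotProduct, smul_dotProduct, dotProduct_smul, smul_eq_mul]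
    field_simp
    ring

lemma borderedMatrix_vecMulVec (z : ι → ℝ) :
    borderedMatrix z (vecMulVec z z) =
      vecMulVec (Sum.elim (fun _ => 1) z) (Sum.elim (fun _ => 1) z) := by
  ext (i | i) (j | j) <;> simp [borderedMatrix, vecMulVec_apply]

end General

section Homogenization

variable {α : Type*} [AddCommMonoid α] [Module ℝ α] {V : Set α} {p : ℝ × α}

lemma one_mem_homg {v : α} (hv : v ∈ V) : ((1 : ℝ), v) ∈ homg V :=
  Or.inl ⟨one_pos, by simpa using hv⟩

lemma fst_nonneg_of_mem_homg (hp : p ∈ homg V) : 0 ≤ p.1 := by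
  rcases hp with hp | rfl
  exacts [hp.1.le, le_rfl]

lemma snd_eq_zero_of_mem_homg (hp : p ∈ homg V) (h : p.1 = 0) : p.2 = 0 := by
  rcases hp with hp | rfl
  exacts [absurd h hp.1.ne', rfl]

lemma inv_smul_mem_of_mem_homg (hp : p ∈ homg V) (h : 0 < p.1) : p.1⁻¹ • p.2 ∈ V := by
  rcases hp with hp | rfl
  exacts [hp.2, absurd h (lt_irrefl 0)]

end Homogenization

section Blocks

variable {m n : ℕ}

def tPart (z : RSAIdx m n → ℝ) : ℝ := z (Sum.inl ())
def bPart (z : RSAIdx m n → ℝ) : Fin m → ℝ := fun i => z (Sum.inr (Sum.inl i))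
def cPart (z : RSAIdx m n → ℝ) : Fin n → ℝ := fun j => z (Sum.inr (Sum.inr (Sum.inl j)))
def xPart (z : RSAIdx m n → ℝ) : Fin n → ℝ :=
  fun j => z (Sum.inr (Sum.inr (Sum.inr (Sum.inl j))))
def yPart (z : RSAIdx m n → ℝ) : Fin m → ℝ :=
  fun i => z (Sum.inr (Sum.inr (Sum.inr (Sum.inr (Sum.inl i)))))
def sPart (z : RSAIdx m n → ℝ) : Fin n → ℝ :=
  fun j => z (Sum.inr (Sum.inr (Sum.inr (Sum.inr (Sum.inr j)))))

def blockVec (t : ℝ) (b : Fin m → ℝ) (c x : Fin n → ℝ) (y : Fin m → ℝ) (s : Fin n → ℝ) :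
    RSAIdx m n → ℝ :=
  Sum.elim (fun _ => t) (Sum.elim b (Sum.elim c (Sum.elim x (Sum.elim y s))))

variable {t : ℝ} {b y : Fin m → ℝ} {c x s : Fin n → ℝ}

@[simp] lemma tPart_blockVec : tPart (blockVec t b c x y s) = t := rfl
@[simp] lemma bPart_blockVec : bPart (blockVec t b c x y s) = b := rfl
@[simp] lemma cPart_blockVec : cPart (blockVec t b c x y s) = c := rfl
@[simp] lemma xPart_blockVec : xPart (blockVec t b c x y s) = x := rfl
@[simp] lemma yPart_blockVec : yPart (blockVec t b c x y s) = y := rfl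
@[simp] lemma sPart_blockVec : sPart (blockVec t b c x y s) = s := rfl

lemma mem_Kset {U : Set ((Fin m → ℝ) × (Fin n → ℝ))} {z : RSAIdx m n → ℝ} :
    z ∈ Kset m n U ↔ (tPart z, bPart z, cPart z) ∈ homg U ∧ 0 ≤ xPart z ∧ 0 ≤ sPart z :=
  Iff.rfl

end Blocks

section Emat

variable {m n : ℕ} (Ahat : Matrix (Fin m) (Fin n) ℝ) (bhat : Fin m → ℝ) (chat : Fin n → ℝ)
  (z : RSAIdx m n → ℝ)

lemma Emat_mulVec_primalRow (i : Fin m) :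
    (Emat m n Ahat bhat chat *ᵥ z) (Sum.inl (Sum.inl i)) =
      (Ahat *ᵥ xPart z) i - (tPart z • bhat + bPart z) i := by
  simp only [mulVec, dotProduct, Emat, of_apply, Fintype.sum_sum_type, Finset.univ_unique,
    PUnit.default_eq_unit, neg_mul, Finset.sum_neg_distrib, Finset.sum_singleton, ite_mul, one_mul,
    zero_mul, Finset.sum_ite_eq, Finset.mem_univ, ↓reduceIte, Finset.sum_const_zero, add_zero,
    zero_add, xPart, tPart, Pi.add_apply, Pi.smul_apply, smul_eq_mul, bPart]
  ring

lemma Emat_mulVec_dualRow (j : Fin n) :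
    (Emat m n Ahat bhat chat *ᵥ z) (Sum.inl (Sum.inr j)) =
      (Ahatᵀ *ᵥ yPart z + sPart z) j - (tPart z • chat + cPart z) j := by
  simp only [mulVec, dotProduct, Emat, of_apply, Fintype.sum_sum_type, Finset.univ_unique,
    PUnit.default_eq_unit, neg_mul, Finset.sum_neg_distrib, Finset.sum_singleton, zero_mul,
    Finset.sum_const_zero, ite_mul, one_mul, Finset.sum_ite_eq, Finset.mem_univ, ↓reduceIte,
    zero_add, Pi.add_apply, transpose_apply, yPart, sPart, tPart, Pi.smul_apply, smul_eq_mul, cPart]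
  ring

lemma Emat_mulVec_tRow : (Emat m n Ahat bhat chat *ᵥ z) (Sum.inr ()) = tPart z := by
  simp [Emat, mulVec, dotProduct, Fintype.sum_sum_type, tPart]

lemma Emat_mulVec_inl_eq_zero_iff :
    (∀ r, (Emat m n Ahat bhat chat *ᵥ z) (Sum.inl r) = 0) ↔
      Ahat *ᵥ xPart z = tPart z • bhat + bPart z ∧
        Ahatᵀ *ᵥ yPart z + sPart z = tPart z • chat + cPart z := by
  simp only [Sum.forall, Emat_mulVec_primalRow, Emat_mulVec_dualRow, sub_eq_zero, funext_iff]

end Emat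

section Program

variable {m n : ℕ} (Ahat : Matrix (Fin m) (Fin n) ℝ) (bhat : Fin m → ℝ) (chat : Fin n → ℝ)
  (U : Set ((Fin m → ℝ) × (Fin n → ℝ)))

def primalValues : Set EReal :=
  {e | ∃ b c x y s, (b, c) ∈ U ∧ Ahat *ᵥ x = bhat + b ∧ 0 ≤ x ∧
    Ahatᵀ *ᵥ y + s = chat + c ∧ 0 ≤ s ∧ e = (((bhat + b) ⬝ᵥ y : ℝ) : EReal)}

def cpObjective (z : RSAIdx m n → ℝ) (Z : Matrix (RSAIdx m n) (RSAIdx m n) ℝ) : ℝ :=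
  ∑ i, Z (Sum.inr (Sum.inl i)) (Sum.inr (Sum.inr (Sum.inr (Sum.inr (Sum.inl i))))) +
    bhat ⬝ᵥ yPart z

def cpValues : Set EReal :=
  {e | ∃ z Z, Emat m n Ahat bhat chat *ᵥ z = fvec m n ∧
    (∀ r, (Emat m n Ahat bhat chat * Z * (Emat m n Ahat bhat chat)ᵀ) r r =
      fvec m n r * fvec m n r) ∧
    borderedMatrix z Z ∈ CPcone (borderedCone m n U) ∧ e = ((cpObjective bhat z Z : ℝ) : EReal)}

/-- The quadratic form linearized by `cpObjective`. -/
def homObjective (w : RSAIdx m n → ℝ) : ℝ :=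
  bPart w ⬝ᵥ yPart w + tPart w * (bhat ⬝ᵥ yPart w)

lemma cpObjective_sum_vecMulVec {k : ℕ} (u : Fin k → RSAIdx m n → ℝ) :
    cpObjective bhat (∑ j, tPart (u j) • u j) (∑ j, vecMulVec (u j) (u j)) =
      ∑ j, homObjective bhat (u j) := by
  simp only [cpObjective, homObjective, Matrix.sum_apply, vecMulVec_apply, Finset.sum_add_distrib]
  congr 1
  · rw [Finset.sum_comm]; rfl
  · simp only [dotProduct, yPart, Finset.sum_apply, Pi.smul_apply, smul_eq_mul, Finset.mul_sum]
    rw [Finset.sum_comm]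
    exact Finset.sum_congr rfl fun j _ => Finset.sum_congr rfl fun i _ => by ring

variable {Ahat bhat chat U}

lemma primalValues_subset_cpValues : primalValues Ahat bhat chat U ⊆ cpValues Ahat bhat chat U := by
  rintro e ⟨b, c, x, y, s, hbc, hprimal, hx, hdual, hs, rfl⟩
  set z : RSAIdx m n → ℝ := blockVec 1 b c x y s
  have hEz : Emat m n Ahat bhat chat *ᵥ z = fvec m n := by
    funext r
    rcases r with (i | j) | _
    · rw [Emat_mulVec_primalRow]
      simp only [z, tPart_blockVec, bPart_blockVec, xPart_blockVec, hprimal, one_smul, sub_self]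
      rfl
    · rw [Emat_mulVec_dualRow]
      simp only [z, tPart_blockVec, cPart_blockVec, yPart_blockVec, sPart_blockVec, hdual,
        one_smul, sub_self]
      rfl
    · rw [Emat_mulVec_tRow]; rfl
  refine ⟨z, vecMulVec z z, hEz, fun r => ?_, ⟨1, fun _ => Sum.elim (fun _ => 1) z, ?_, ?_⟩, ?_⟩
  · simp [mul_vecMulVec, vecMulVec_mul, vecMul_transpose, hEz, vecMulVec_apply]
  · exact fun _ => ⟨zero_le_one, mem_Kset.mpr ⟨one_mem_homg hbc, hx, hs⟩⟩
  · simp [borderedMatrix_vecMulVec]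
  · rw [cpObjective, add_dotProduct, add_comm]
    rfl

lemma inv_smul_mem_primalValues {w : RSAIdx m n → ℝ} (hw : w ∈ Kset m n U)
    (hrows : ∀ r, (Emat m n Ahat bhat chat *ᵥ w) (Sum.inl r) = 0) (ht : 0 < tPart w) :
    (((bhat + (tPart w)⁻¹ • bPart w) ⬝ᵥ ((tPart w)⁻¹ • yPart w) : ℝ) : EReal) ∈
      primalValues Ahat bhat chat U := by
  obtain ⟨hhom, hx, hs⟩ := mem_Kset.mp hw
  obtain ⟨hprimal, hdual⟩ := (Emat_mulVec_inl_eq_zero_iff Ahat bhat chat w).mp hrows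
  have hunscale : ∀ {ι : Type} (v v' : ι → ℝ), (tPart w)⁻¹ • (tPart w • v + v') =
      v + (tPart w)⁻¹ • v' := fun v v' => by
    rw [smul_add, smul_smul, inv_mul_cancel₀ ht.ne', one_smul]
  refine ⟨(tPart w)⁻¹ • bPart w, (tPart w)⁻¹ • cPart w, (tPart w)⁻¹ • xPart w,
    (tPart w)⁻¹ • yPart w, (tPart w)⁻¹ • sPart w, ?_, ?_, ?_, ?_, ?_, rfl⟩
  · simpa using inv_smul_mem_of_mem_homg hhom ht
  · rw [mulVec_smul, hprimal, hunscale]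
  · exact smul_nonneg (inv_nonneg.mpr ht.le) hx
  · rw [mulVec_smul, ← smul_add, hdual, hunscale]
  · exact smul_nonneg (inv_nonneg.mpr ht.le) hs

lemma exists_homDecomposition {z : RSAIdx m n → ℝ} {Z : Matrix (RSAIdx m n) (RSAIdx m n) ℝ}
    (hEz : Emat m n Ahat bhat chat *ᵥ z = fvec m n)
    (hdiag : ∀ r, (Emat m n Ahat bhat chat * Z * (Emat m n Ahat bhat chat)ᵀ) r r =
      fvec m n r * fvec m n r)
    (hCP : borderedMatrix z Z ∈ CPcone (borderedCone m n U)) :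
    ∃ (k : ℕ) (u : Fin k → RSAIdx m n → ℝ), (∀ j, u j ∈ Kset m n U) ∧
      (∀ j r, (Emat m n Ahat bhat chat *ᵥ u j) (Sum.inl r) = 0) ∧
      ∑ j, tPart (u j) ^ 2 = 1 ∧ cpObjective bhat z Z = ∑ j, homObjective bhat (u j) := by
  obtain ⟨k, v, hv, hsum⟩ := hCP
  set u : Fin k → RSAIdx m n → ℝ := fun j i => v j (Sum.inr i)
  obtain ⟨hborder, hz, hZ⟩ := components_of_borderedMatrix_eq_sum hsum
  have hsq : ∀ r, ∑ j, (Emat m n Ahat bhat chat *ᵥ u j) r * (Emat m n Ahat bhat chat *ᵥ u j) r =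
      fvec m n r * fvec m n r := fun r => by
    rw [← hdiag r, hZ, mul_sum_vecMulVec_mul_transpose_apply_self]
  have hrows : ∀ j r, (Emat m n Ahat bhat chat *ᵥ u j) (Sum.inl r) = 0 := fun j r => by
    have h := hsq (Sum.inl r)
    rw [show fvec m n (Sum.inl r) = 0 by cases r <;> rfl, mul_zero,
      Finset.sum_mul_self_eq_zero_iff] at h
    exact h j (Finset.mem_univ j)
  have ht : ∑ j, tPart (u j) * tPart (u j) = 1 := by
    simpa [Emat_mulVec_tRow, fvec] using hsq (Sum.inr ())
  have hborder_t : ∑ j, v j (Sum.inl ()) * tPart (u j) = 1 := by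
    have h := congrFun hEz (Sum.inr ())
    rw [Emat_mulVec_tRow, hz] at h
    simpa [tPart, Finset.sum_apply, fvec] using h
  have hborder_eq := eq_of_sum_mul_self_eq_one hborder hborder_t ht
  refine ⟨k, u, fun j => (hv j).2, hrows, by simpa [sq] using ht, ?_⟩
  have hz' : z = ∑ j, tPart (u j) • u j := by
    rw [hz]
    exact Finset.sum_congr rfl fun j _ => by rw [congrFun hborder_eq j]
  rw [hz', hZ, cpObjective_sum_vecMulVec]

lemma sum_homObjective_le_sSup_primalValues {k : ℕ} {u : Fin k → RSAIdx m n → ℝ}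
    (hu : ∀ j, u j ∈ Kset m n U)
    (hrows : ∀ j r, (Emat m n Ahat bhat chat *ᵥ u j) (Sum.inl r) = 0)
    (ht : ∑ j, tPart (u j) ^ 2 = 1) :
    ((∑ j, homObjective bhat (u j) : ℝ) : EReal) ≤ sSup (primalValues Ahat bhat chat U) := by
  set val : Fin k → ℝ := fun j =>
    (bhat + (tPart (u j))⁻¹ • bPart (u j)) ⬝ᵥ ((tPart (u j))⁻¹ • yPart (u j))
  have hhom : ∀ j, (tPart (u j), bPart (u j), cPart (u j)) ∈ homg U := fun j => (hu j).1
  have hobj : ∀ j, homObjective bhat (u j) = tPart (u j) ^ 2 * val j := fun j =>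
    dotProduct_add_mul_dotProduct_eq fun h0 =>
      congrArg Prod.fst (snd_eq_zero_of_mem_homg (hhom j) h0)
  obtain ⟨j, hj, hle⟩ := exists_pos_weight_sum_mul_le (a := val) (fun j => sq_nonneg _) ht
  have htj : 0 < tPart (u j) :=
    (fst_nonneg_of_mem_homg (hhom j)).lt_of_ne fun h => hj.ne' (by simpa using h.symm)
  calc ((∑ j, homObjective bhat (u j) : ℝ) : EReal)
      = ((∑ j, tPart (u j) ^ 2 * val j : ℝ) : EReal) := by
        rw [Finset.sum_congr rfl fun j _ => hobj j]
    _ ≤ (val j : EReal) := EReal.coe_le_coe_iff.mpr hle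
    _ ≤ _ := le_sSup (inv_smul_mem_primalValues (hu j) (hrows j) htj)

end Program

theorem q_plus_copositive_formulation_general (m n : ℕ)
    (Ahat : Matrix (Fin m) (Fin n) ℝ) (bhat : Fin m → ℝ) (chat : Fin n → ℝ)
    (U : Set ((Fin m → ℝ) × (Fin n → ℝ))) :
    sSup {e : EReal | ∃ b c x y s, (b, c) ∈ U ∧
        Ahat.mulVec x = bhat + b ∧ 0 ≤ x ∧
        Ahat.transpose.mulVec y + s = chat + c ∧ 0 ≤ s ∧
        e = (((bhat + b) ⬝ᵥ y : ℝ) : EReal)} =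
      sSup {e : EReal | ∃ (z : RSAIdx m n → ℝ) (Z : Matrix (RSAIdx m n) (RSAIdx m n) ℝ),
        (Emat m n Ahat bhat chat).mulVec z = fvec m n ∧
        (∀ r, (Emat m n Ahat bhat chat * Z * (Emat m n Ahat bhat chat).transpose) r r =
          fvec m n r * fvec m n r) ∧
        borderedMatrix z Z ∈ CPcone (borderedCone m n U) ∧
        e = (((∑ i, Z (Sum.inr (Sum.inl i))
                      (Sum.inr (Sum.inr (Sum.inr (Sum.inr (Sum.inl i))))))
              + ∑ i, bhat i * z (Sum.inr (Sum.inr (Sum.inr (Sum.inr (Sum.inl i))))) : ℝ) : EReal)} := by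
  show sSup (primalValues Ahat bhat chat U) = sSup (cpValues Ahat bhat chat U)
  refine le_antisymm (sSup_le_sSup primalValues_subset_cpValues) (sSup_le ?_)
  rintro e ⟨z, Z, hEz, hdiag, hCP, rfl⟩
  obtain ⟨k, u, hu, hrows, ht, hobj⟩ := exists_homDecomposition hEz hdiag hCP
  rw [hobj]
  exact sum_homObjective_le_sSup_primalValues hu hrows ht

/-- Under Assumptions 1 and 2, the worst-case restricted value
`q⁺ = sup{(b̂+b)ᵀy : Âx = b̂+b, x ≥ 0, Âᵀy + s = ĉ+c, s ≥ 0, (b,c) ∈ U}` equals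
the optimal value of the completely positive program: maximize
`(∑ᵢ Z_{bᵢ,yᵢ}) + b̂ᵀy` subject to `Ez = f`, `diag(EZEᵀ) = f ∘ f`, and
`[[1, zᵀ],[z, Z]] ∈ CP(ℝ₊ × K)` with `K = homg(U) × ℝⁿ₊ × ℝᵐ × ℝⁿ₊`. -/
theorem q_plus_copositive_formulation (m n : ℕ)
    (Ahat : Matrix (Fin m) (Fin n) ℝ) (bhat : Fin m → ℝ) (chat : Fin n → ℝ)
    (U : Set ((Fin m → ℝ) × (Fin n → ℝ)))
    (hUcompact : IsCompact U) (hUconvex : Convex ℝ U) (hU0 : (0, 0) ∈ U)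
    (hP0 : ∃ x : Fin n → ℝ, Ahat.mulVec x = bhat ∧ 0 ≤ x)
    (hD0 : ∃ (y : Fin m → ℝ) (s : Fin n → ℝ), Ahat.transpose.mulVec y + s = chat ∧ 0 ≤ s)
    (hbdd : Bornology.IsBounded {x : Fin n → ℝ | Ahat.mulVec x = bhat ∧ 0 ≤ x} ∨
      Bornology.IsBounded {ys : (Fin m → ℝ) × (Fin n → ℝ) |
        Ahat.transpose.mulVec ys.1 + ys.2 = chat ∧ 0 ≤ ys.2}) :
    sSup {e : EReal | ∃ b c x y s, (b, c) ∈ U ∧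
        Ahat.mulVec x = bhat + b ∧ 0 ≤ x ∧
        Ahat.transpose.mulVec y + s = chat + c ∧ 0 ≤ s ∧
        e = (((bhat + b) ⬝ᵥ y : ℝ) : EReal)} =
      sSup {e : EReal | ∃ (z : RSAIdx m n → ℝ) (Z : Matrix (RSAIdx m n) (RSAIdx m n) ℝ),
        (Emat m n Ahat bhat chat).mulVec z = fvec m n ∧
        (∀ r, (Emat m n Ahat bhat chat * Z * (Emat m n Ahat bhat chat).transpose) r r =
          fvec m n r * fvec m n r) ∧
        borderedMatrix z Z ∈ CPcone (borderedCone m n U) ∧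
        e = (((∑ i, Z (Sum.inr (Sum.inl i))
                      (Sum.inr (Sum.inr (Sum.inr (Sum.inr (Sum.inl i))))))
              + ∑ i, bhat i * z (Sum.inr (Sum.inr (Sum.inr (Sum.inr (Sum.inl i))))) : ℝ) : EReal)} :=
  q_plus_copositive_formulation_general m n Ahat bhat chat U
end

section
/- Under Assumptions 1 and 2, appending the complementarity constraint x ∘ s = 0 (the Hadamard product, i.e., x_j s_j = 0 for all j) changes neither optimal value: inf{(ĉ+c)^T x : Âx = b̂+b, x ≥ 0, Â^T y + s = ĉ+c, s ≥ 0, (b,c) ∈ U} = inf{(ĉ+c)^T x : Âx = b̂+b, x ≥ 0, Â^T y + s = ĉ+c, s ≥ 0, x ∘ s = 0, (b,c) ∈ U}, and sup{(b̂+b)^T y : Âx = b̂+b, x ≥ 0, Â^T y + s = ĉ+c, s ≥ 0, (b,c) ∈ U} = sup{(b̂+b)^T y : Âx = b̂+b, x ≥ 0, Â^T y + s = ĉ+c, s ≥ 0, x ∘ s = 0, (b,c) ∈ U}. -/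
open Matrix

/-!
For fixed `(b, c)` the claim is strong duality with complementary slackness: if the primal and the
dual are feasible, then some feasible `x, (y, s)` has `cᵀx ≤ bᵀy`. Since the duality gap
`cᵀx - bᵀy` equals `sᵀx ≥ 0`, it vanishes, which forces `x ∘ s = 0`, and by weak duality this `x`
and `y` are at least as good as any feasible ones. Hence every value in an unrestricted set is
dominated by one in the restricted set.

Strong duality is Farkas' lemma for the system `Ax = b, Aᵀy + s = c, cᵀx - bᵀy + t = 0` in
`x, s, t ≥ 0` and free `y`. Farkas' lemma needs the image of a nonnegative orthant under a linear
map to be closed; by a conic Carathéodory argument this image is a finite union of images of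
closed sets on which the map is injective.
-/

open Function Set

section ImageNonneg

variable {ι E : Type*} [NormedAddCommGroup E] [NormedSpace ℝ E]

theorem LinearMap.isClosed_image_of_disjoint_ker {V : Type*} [NormedAddCommGroup V]
    [NormedSpace ℝ V] [FiniteDimensional ℝ V] (T : V →ₗ[ℝ] E) {p : Submodule ℝ V}
    (hp : Disjoint p (LinearMap.ker T)) {C : Set V} (hC : IsClosed C) (hCp : C ⊆ p) :
    IsClosed (T '' C) := by
  have hinj : LinearMap.ker (T.domRestrict p) = ⊥ := by
    rwa [LinearMap.ker_domRestrict, ← Submodule.disjoint_iff_comap_eq_bot]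
  have hC' : T '' C = T.domRestrict p '' ((↑) ⁻¹' C) := by
    ext z
    constructor
    · rintro ⟨v, hv, rfl⟩
      exact ⟨⟨v, hCp hv⟩, hv, rfl⟩
    · rintro ⟨v, hv, rfl⟩
      exact ⟨v, hv, rfl⟩
  rw [hC']
  exact (LinearMap.isClosedEmbedding_of_injective hinj).isClosedMap _
    (hC.preimage continuous_subtype_val)

abbrev supportedIn (s : Set ι) : Submodule ℝ (ι → ℝ) := Submodule.pi sᶜ fun _ => ⊥

theorem mem_supportedIn {s : Set ι} {l : ι → ℝ} : l ∈ supportedIn s ↔ support l ⊆ s := by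
  simp [Submodule.mem_pi, not_imp_comm]

variable [Fintype ι]

theorem exists_nonneg_support_ssubset (T : (ι → ℝ) →ₗ[ℝ] E) {l : ι → ℝ} (hl : 0 ≤ l)
    (hdep : ¬ Disjoint (supportedIn (support l)) (LinearMap.ker T)) :
    ∃ l', 0 ≤ l' ∧ T l' = T l ∧ support l' ⊂ support l := by
  classical
  obtain ⟨h, hsupp, hTh, j, hj⟩ : ∃ h, support h ⊆ support l ∧ T h = 0 ∧ ∃ j, 0 < h j := by
    rw [Submodule.disjoint_def] at hdep
    push Not at hdep
    obtain ⟨h, hp, hTh, hne⟩ := hdep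
    obtain ⟨j, hj⟩ := Function.ne_iff.mp hne
    rw [mem_supportedIn] at hp
    rcases hj.lt_or_gt with hj | hj
    · exact ⟨-h, by simpa using hp, by simpa using hTh, j, by simpa using hj⟩
    · exact ⟨h, hp, hTh, j, hj⟩
  -- the largest `t` keeping `l - t • h` nonnegative
  obtain ⟨j₀, hj₀, hmin⟩ := (Finset.univ.filter fun i => 0 < h i).exists_min_image
    (fun i => l i / h i) ⟨j, by simpa using hj⟩
  simp only [Finset.mem_filter, Finset.mem_univ, true_and] at hj₀ hmin
  set t := l j₀ / h j₀
  have ht : 0 ≤ t := div_nonneg (hl j₀) hj₀.le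
  refine ⟨l - t • h, fun i => ?_, by simp [hTh], ?_⟩
  · show 0 ≤ l i - t * h i
    rcases le_or_gt (h i) 0 with hi | hi
    · have hli : 0 ≤ l i := hl i
      linarith [mul_nonpos_of_nonneg_of_nonpos ht hi]
    · linarith [(le_div_iff₀ hi).mp (hmin i hi)]
  · refine (Set.ssubset_iff_of_subset fun i hi => ?_).mpr ⟨j₀, ?_, ?_⟩
    · by_contra hli
      have hhi : h i = 0 := notMem_support.mp fun hh => hli (hsupp hh)
      simp [notMem_support.mp hli, hhi] at hi
    · exact hsupp hj₀.ne'
    · simp [t, div_mul_cancel₀ _ hj₀.ne']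

theorem exists_nonneg_eq_disjoint_ker (T : (ι → ℝ) →ₗ[ℝ] E) {l : ι → ℝ} (hl : 0 ≤ l) :
    ∃ l', 0 ≤ l' ∧ T l' = T l ∧ Disjoint (supportedIn (support l')) (LinearMap.ker T) := by
  suffices ∀ s : Set ι, ∀ l, 0 ≤ l → support l = s →
      ∃ l', 0 ≤ l' ∧ T l' = T l ∧ Disjoint (supportedIn (support l')) (LinearMap.ker T) from
    this _ l hl rfl
  intro s
  induction s using WellFoundedLT.induction with
  | _ s ih =>
    intro l hl hs
    by_cases hd : Disjoint (supportedIn (support l)) (LinearMap.ker T)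
    · exact ⟨l, hl, rfl, hd⟩
    obtain ⟨l', hl', hTl', hlt⟩ := exists_nonneg_support_ssubset T hl hd
    obtain ⟨l'', hl'', hTl'', hd''⟩ := ih _ (hs ▸ hlt) l' hl' rfl
    exact ⟨l'', hl'', hTl''.trans hTl', hd''⟩

theorem LinearMap.isClosed_image_nonneg (T : (ι → ℝ) →ₗ[ℝ] E) :
    IsClosed (T '' {l | 0 ≤ l}) := by
  have hcover : T '' {l | 0 ≤ l} = ⋃ (s : Set ι) (_ : Disjoint (supportedIn s) (LinearMap.ker T)),
      T '' ({l | 0 ≤ l} ∩ supportedIn s) := by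
    refine subset_antisymm ?_ (iUnion₂_subset fun s _ => image_mono inter_subset_left)
    rintro _ ⟨l, hl, rfl⟩
    obtain ⟨l', hl', hTl', hd⟩ := exists_nonneg_eq_disjoint_ker T hl
    exact mem_iUnion₂.mpr ⟨_, hd, l', ⟨hl', mem_supportedIn.mpr subset_rfl⟩, hTl'⟩
  rw [hcover]
  exact isClosed_iUnion_of_finite fun s => isClosed_iUnion_of_finite fun hd =>
    T.isClosed_image_of_disjoint_ker hd (isClosed_Ici.inter (Submodule.closed_of_finiteDimensional _))
      inter_subset_right

theorem exists_separating_of_notMem_image_nonneg (T : (ι → ℝ) →ₗ[ℝ] E) {z : E}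
    (hz : z ∉ T '' {l | 0 ≤ l}) :
    ∃ f : StrongDual ℝ E, (∀ l, 0 ≤ l → 0 ≤ f (T l)) ∧ f z < 0 := by
  obtain ⟨f, hf, hfz⟩ := ProperCone.hyperplane_separation_point
    ⟨(PointedCone.positive ℝ (ι → ℝ)).map T, T.isClosed_image_nonneg⟩ hz
  exact ⟨f, fun l hl => hf _ ⟨l, hl, rfl⟩, hfz⟩

end ImageNonneg

section LinearProgramming

variable {μ ν : Type*} [Fintype μ] [Fintype ν] (A : Matrix μ ν ℝ) (b : μ → ℝ) (c : ν → ℝ)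

theorem LinearMap.exists_eq_dotProduct {κ : Type*} [Fintype κ] (g : (κ → ℝ) →ₗ[ℝ] ℝ) :
    ∃ u, ∀ p, g p = u ⬝ᵥ p := by
  classical
  exact ⟨(dotProductEquiv ℝ κ).symm g, fun p => by
    rw [← dotProductEquiv_apply_apply, LinearEquiv.apply_symm_apply]⟩

variable {A b c} in
theorem dotProduct_sub_dotProduct_eq_slack {x : ν → ℝ} {y : μ → ℝ} {s : ν → ℝ}
    (hx : A *ᵥ x = b) (hys : Aᵀ *ᵥ y + s = c) : c ⬝ᵥ x - b ⬝ᵥ y = s ⬝ᵥ x := by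
  rw [← hys, ← hx, add_dotProduct, dotProduct_comm _ x, dotProduct_transpose_mulVec,
    dotProduct_comm y, dotProduct_comm s]
  ring

variable {A b c} in
theorem dotProduct_le_dotProduct_of_feasible {x : ν → ℝ} {y : μ → ℝ} {s : ν → ℝ}
    (hx : A *ᵥ x = b) (hx0 : 0 ≤ x) (hys : Aᵀ *ᵥ y + s = c) (hs : 0 ≤ s) :
    b ⬝ᵥ y ≤ c ⬝ᵥ x := by
  linarith [dotProduct_sub_dotProduct_eq_slack hx hys, dotProduct_nonneg_of_nonneg hs hx0]

/-- The coordinates of the domain are the blocks `x, y⁺, y⁻, s, t`; a nonnegative preimage of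
`(b, c, 0)` is a primal-dual feasible pair `x, (y⁺ - y⁻, s)` with `cᵀx ≤ bᵀy`. -/
def lpOptimalityMap : (ν ⊕ μ ⊕ μ ⊕ ν ⊕ Unit → ℝ) →ₗ[ℝ] (μ → ℝ) × (ν → ℝ) × ℝ where
  toFun l :=
    (A *ᵥ (l ∘ .inl),
      Aᵀ *ᵥ (l ∘ .inr ∘ .inl - l ∘ .inr ∘ .inr ∘ .inl) + l ∘ .inr ∘ .inr ∘ .inr ∘ .inl,
      c ⬝ᵥ (l ∘ .inl) - b ⬝ᵥ (l ∘ .inr ∘ .inl - l ∘ .inr ∘ .inr ∘ .inl) +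
        l (.inr (.inr (.inr (.inr ())))))
  map_add' l l' := by
    simp only [Pi.add_comp, Pi.add_apply, add_sub_add_comm, mulVec_add, dotProduct_add,
      Prod.mk_add_mk]
    congr 2 <;> abel
  map_smul' r l := by
    simp only [Pi.smul_comp, Pi.smul_apply, ← smul_sub, mulVec_smul, dotProduct_smul,
      Prod.smul_mk, smul_add, smul_eq_mul, RingHom.id_apply]
    congr 2
    ring

theorem exists_lpOptimality_certificate
    (h : ¬ ∃ x y s, A *ᵥ x = b ∧ 0 ≤ x ∧ Aᵀ *ᵥ y + s = c ∧ 0 ≤ s ∧ c ⬝ᵥ x ≤ b ⬝ᵥ y) :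
    ∃ (u : μ → ℝ) (v : ν → ℝ) (w : ℝ),
      (∀ x, 0 ≤ x → ∀ y s, 0 ≤ s → ∀ t : ℝ, 0 ≤ t →
        0 ≤ u ⬝ᵥ A *ᵥ x + v ⬝ᵥ (Aᵀ *ᵥ y + s) + (c ⬝ᵥ x - b ⬝ᵥ y + t) * w) ∧
      u ⬝ᵥ b + v ⬝ᵥ c < 0 := by
  obtain ⟨f, hf, hfz⟩ := exists_separating_of_notMem_image_nonneg (lpOptimalityMap A b c)
    (z := (b, c, 0)) <| by
      rintro ⟨l, hl, hTl⟩
      simp only [lpOptimalityMap, LinearMap.coe_mk, AddHom.coe_mk, Prod.mk.injEq] at hTl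
      have ht : 0 ≤ l (.inr (.inr (.inr (.inr ())))) := hl _
      exact h ⟨_, _, _, hTl.1, fun _ => hl _, hTl.2.1, fun _ => hl _, by linarith [hTl.2.2]⟩
  obtain ⟨u, hu⟩ := (f.toLinearMap ∘ₗ LinearMap.inl ℝ _ _).exists_eq_dotProduct
  obtain ⟨v, hv⟩ :=
    (f.toLinearMap ∘ₗ LinearMap.inr ℝ _ _ ∘ₗ LinearMap.inl ℝ _ _).exists_eq_dotProduct
  have hf_apply : ∀ p q r, f (p, q, r) = u ⬝ᵥ p + v ⬝ᵥ q + r * f (0, 0, 1) := by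
    intro p q r
    have hpqr : (p, q, r) = (p, 0) + (0, (q, 0)) + r • (0, (0, 1)) := by simp
    rw [hpqr, map_add, map_add, map_smul, ← hu, ← hv]
    rfl
  refine ⟨u, v, f (0, 0, 1), fun x hx y s hs t ht => ?_, by rw [hf_apply] at hfz; simpa using hfz⟩
  have hl : 0 ≤ Sum.elim x (Sum.elim y⁺ (Sum.elim y⁻ (Sum.elim s fun _ : Unit => t))) := by
    rintro (j | i | i | j | -)
    exacts [hx j, posPart_nonneg y i, negPart_nonneg y i, hs j, ht]
  have h := hf _ hl
  change 0 ≤ f (A *ᵥ x, Aᵀ *ᵥ (y⁺ - y⁻) + s, c ⬝ᵥ x - b ⬝ᵥ (y⁺ - y⁻) + t) at h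
  rwa [posPart_sub_negPart, hf_apply] at h

theorem exists_feasible_dotProduct_le (hP : ∃ x, A *ᵥ x = b ∧ 0 ≤ x)
    (hD : ∃ y s, Aᵀ *ᵥ y + s = c ∧ 0 ≤ s) :
    ∃ x y s, A *ᵥ x = b ∧ 0 ≤ x ∧ Aᵀ *ᵥ y + s = c ∧ 0 ≤ s ∧ c ⬝ᵥ x ≤ b ⬝ᵥ y := by
  classical
  by_contra h
  obtain ⟨u, v, w, hcert, hneg⟩ := exists_lpOptimality_certificate A b c h
  obtain ⟨x₀, hAx₀, hx₀⟩ := hP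
  obtain ⟨y₀, s₀, hys₀, hs₀⟩ := hD
  have hv : 0 ≤ v := fun j => by
    simpa using hcert 0 le_rfl 0 (Pi.single j 1) (Pi.single_nonneg.mpr zero_le_one) 0 le_rfl
  have hw : 0 ≤ w := by simpa using hcert 0 le_rfl 0 0 le_rfl 1 zero_le_one
  -- if `w > 0`, then `v / w` and `-u / w` would be feasible with a negative duality gap
  have hwQ : 0 ≤ (u ⬝ᵥ b + v ⬝ᵥ c) * w := by
    have := hcert v hv (-u) 0 le_rfl 0 le_rfl
    simp only [mulVec_neg, add_zero, dotProduct_neg, dotProduct_transpose_mulVec,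
      sub_neg_eq_add, dotProduct_comm c v, dotProduct_comm b u] at this
    linarith
  have hQ : 0 ≤ u ⬝ᵥ b + v ⬝ᵥ c + (c ⬝ᵥ x₀ - b ⬝ᵥ y₀) * w := by
    simpa [hAx₀, hys₀] using hcert x₀ hx₀ y₀ s₀ hs₀ 0 le_rfl
  rcases hw.eq_or_lt with rfl | hw
  · linarith [mul_zero (c ⬝ᵥ x₀ - b ⬝ᵥ y₀)]
  · nlinarith

variable {b c} in
theorem exists_feasible_complementary_le {x : ν → ℝ} {y : μ → ℝ} {s : ν → ℝ}
    (hx : A *ᵥ x = b) (hx0 : 0 ≤ x) (hys : Aᵀ *ᵥ y + s = c) (hs : 0 ≤ s) :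
    ∃ x' y' s', A *ᵥ x' = b ∧ 0 ≤ x' ∧ Aᵀ *ᵥ y' + s' = c ∧ 0 ≤ s' ∧ (∀ j, x' j * s' j = 0) ∧
      c ⬝ᵥ x' ≤ c ⬝ᵥ x ∧ b ⬝ᵥ y ≤ b ⬝ᵥ y' := by
  obtain ⟨x', y', s', hx', hx'0, hys', hs', hle⟩ :=
    exists_feasible_dotProduct_le A b c ⟨x, hx, hx0⟩ ⟨y, s, hys, hs⟩
  have hgap : c ⬝ᵥ x' - b ⬝ᵥ y' = s' ⬝ᵥ x' := dotProduct_sub_dotProduct_eq_slack hx' hys'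
  have hslack : s' ⬝ᵥ x' = 0 := le_antisymm (by linarith) (dotProduct_nonneg_of_nonneg hs' hx'0)
  refine ⟨x', y', s', hx', hx'0, hys', hs', fun j => ?_, ?_, ?_⟩
  · rw [mul_comm]
    exact (Finset.sum_eq_zero_iff_of_nonneg fun j _ => mul_nonneg (hs' j) (hx'0 j)).mp hslack j
      (Finset.mem_univ j)
  · linarith [dotProduct_le_dotProduct_of_feasible hx hx0 hys' hs']
  · linarith [dotProduct_le_dotProduct_of_feasible hx' hx'0 hys hs]

end LinearProgramming

theorem complementarity_constraint_redundant_general (m n : ℕ)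
    (Ahat : Matrix (Fin m) (Fin n) ℝ) (bhat : Fin m → ℝ) (chat : Fin n → ℝ)
    (U : Set ((Fin m → ℝ) × (Fin n → ℝ))) :
    sInf {e : EReal | ∃ b c x y s, (b, c) ∈ U ∧
        Ahat.mulVec x = bhat + b ∧ 0 ≤ x ∧
        Ahat.transpose.mulVec y + s = chat + c ∧ 0 ≤ s ∧
        e = (((chat + c) ⬝ᵥ x : ℝ) : EReal)} =
      sInf {e : EReal | ∃ b c x y s, (b, c) ∈ U ∧
        Ahat.mulVec x = bhat + b ∧ 0 ≤ x ∧
        Ahat.transpose.mulVec y + s = chat + c ∧ 0 ≤ s ∧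
        (∀ j, x j * s j = 0) ∧
        e = (((chat + c) ⬝ᵥ x : ℝ) : EReal)} ∧
    sSup {e : EReal | ∃ b c x y s, (b, c) ∈ U ∧
        Ahat.mulVec x = bhat + b ∧ 0 ≤ x ∧
        Ahat.transpose.mulVec y + s = chat + c ∧ 0 ≤ s ∧
        e = (((bhat + b) ⬝ᵥ y : ℝ) : EReal)} =
      sSup {e : EReal | ∃ b c x y s, (b, c) ∈ U ∧
        Ahat.mulVec x = bhat + b ∧ 0 ≤ x ∧
        Ahat.transpose.mulVec y + s = chat + c ∧ 0 ≤ s ∧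
        (∀ j, x j * s j = 0) ∧
        e = (((bhat + b) ⬝ᵥ y : ℝ) : EReal)} := by
  refine ⟨le_antisymm (sInf_le_sInf ?_) (sInf_le_sInf_of_isCoinitialFor ?_),
    le_antisymm (sSup_le_sSup_of_isCofinalFor ?_) (sSup_le_sSup ?_)⟩
  · rintro _ ⟨b, c, x, y, s, hU, hx, hx0, hys, hs, -, rfl⟩
    exact ⟨b, c, x, y, s, hU, hx, hx0, hys, hs, rfl⟩
  · rintro _ ⟨b, c, x, y, s, hU, hx, hx0, hys, hs, rfl⟩
    obtain ⟨x', y', s', hx', hx0', hys', hs', hcomp, hle, -⟩ :=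
      exists_feasible_complementary_le Ahat hx hx0 hys hs
    exact ⟨_, ⟨b, c, x', y', s', hU, hx', hx0', hys', hs', hcomp, rfl⟩, EReal.coe_le_coe hle⟩
  · rintro _ ⟨b, c, x, y, s, hU, hx, hx0, hys, hs, rfl⟩
    obtain ⟨x', y', s', hx', hx0', hys', hs', hcomp, -, hle⟩ :=
      exists_feasible_complementary_le Ahat hx hx0 hys hs
    exact ⟨_, ⟨b, c, x', y', s', hU, hx', hx0', hys', hs', hcomp, rfl⟩, EReal.coe_le_coe hle⟩
  · rintro _ ⟨b, c, x, y, s, hU, hx, hx0, hys, hs, -, rfl⟩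
    exact ⟨b, c, x, y, s, hU, hx, hx0, hys, hs, rfl⟩

/-- Under Assumption 1 (`U` compact, convex, containing
`(0,0)`) and Assumption 2 (`P(0)` and `D(0)` nonempty, at least one bounded),
appending the complementarity constraint `x ∘ s = 0` (i.e. `xⱼsⱼ = 0` for all
`j`) changes neither the optimal value of the primal-dual bilinear program for
`q⁻` nor that for `q⁺`. -/
theorem complementarity_constraint_redundant (m n : ℕ)
    (Ahat : Matrix (Fin m) (Fin n) ℝ) (bhat : Fin m → ℝ) (chat : Fin n → ℝ)
    (U : Set ((Fin m → ℝ) × (Fin n → ℝ)))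
    (hUcompact : IsCompact U) (hUconvex : Convex ℝ U) (hU0 : (0, 0) ∈ U)
    (hP0 : (Pfeas m n Ahat bhat 0).Nonempty) (hD0 : (Dfeas m n Ahat chat 0).Nonempty)
    (hbdd : Bornology.IsBounded (Pfeas m n Ahat bhat 0) ∨
      Bornology.IsBounded (Dfeas m n Ahat chat 0)) :
    sInf {e : EReal | ∃ b c x y s, (b, c) ∈ U ∧
        Ahat.mulVec x = bhat + b ∧ 0 ≤ x ∧
        Ahat.transpose.mulVec y + s = chat + c ∧ 0 ≤ s ∧
        e = (((chat + c) ⬝ᵥ x : ℝ) : EReal)} =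
      sInf {e : EReal | ∃ b c x y s, (b, c) ∈ U ∧
        Ahat.mulVec x = bhat + b ∧ 0 ≤ x ∧
        Ahat.transpose.mulVec y + s = chat + c ∧ 0 ≤ s ∧
        (∀ j, x j * s j = 0) ∧
        e = (((chat + c) ⬝ᵥ x : ℝ) : EReal)} ∧
    sSup {e : EReal | ∃ b c x y s, (b, c) ∈ U ∧
        Ahat.mulVec x = bhat + b ∧ 0 ≤ x ∧
        Ahat.transpose.mulVec y + s = chat + c ∧ 0 ≤ s ∧
        e = (((bhat + b) ⬝ᵥ y : ℝ) : EReal)} =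
      sSup {e : EReal | ∃ b c x y s, (b, c) ∈ U ∧
        Ahat.mulVec x = bhat + b ∧ 0 ≤ x ∧
        Ahat.transpose.mulVec y + s = chat + c ∧ 0 ≤ s ∧
        (∀ j, x j * s j = 0) ∧
        e = (((bhat + b) ⬝ᵥ y : ℝ) : EReal)} :=
  complementarity_constraint_redundant_general m n Ahat bhat chat U
end
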